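/- arXiv:0910.4224 — 10 statements merged into one kernel-verified Lean document; each statement's English description precedes it below -/
import Mathlib

section
/- For 0 ≤ k ≤ ⌊n/2⌋, the sum Σ_{i=0}^{k} C(n,i) is at most 2^{H(k/n)·n}, where H is the binary entropy function. -/
/-!
Put `p = k / n ≤ 1/2`. Every term of the binomial expansion of `(p + (1 - p))^n = 1` with index
`i ≤ k` satisfies `C(n,i) p^i (1-p)^(n-i) ≥ C(n,i) p^k (1-p)^(n-k)`, because `p ≤ 1 - p`.
Hence `(∑_{i ≤ k} C(n,i)) · p^k (1-p)^(n-k) ≤ 1`, and `p^k (1-p)^(n-k) = 2^(-H(p) n)`.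
-/

/-- The binary entropy function `H(p) = -p log₂ p - (1-p) log₂ (1-p)`
(with the convention `log₂ 0 = 0`, so that `H(0) = H(1) = 0`). -/
noncomputable def binH (p : ℝ) : ℝ := -p * Real.logb 2 p - (1 - p) * Real.logb 2 (1 - p)

open Finset

lemma pow_mul_one_sub_pow_le_of_le {p : ℝ} (hp : 0 ≤ p) (hpq : p ≤ 1 - p) {n i k : ℕ}
    (hik : i ≤ k) (hkn : k ≤ n) :
    p ^ k * (1 - p) ^ (n - k) ≤ p ^ i * (1 - p) ^ (n - i) := by
  obtain ⟨d, rfl⟩ := Nat.exists_eq_add_of_le hik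
  have hni : n - i = d + (n - (i + d)) := by omega
  calc p ^ (i + d) * (1 - p) ^ (n - (i + d))
      = p ^ i * (p ^ d * (1 - p) ^ (n - (i + d))) := by ring
    _ ≤ p ^ i * ((1 - p) ^ d * (1 - p) ^ (n - (i + d))) := by
      have : 0 ≤ 1 - p := hp.trans hpq
      gcongr
    _ = p ^ i * (1 - p) ^ (n - i) := by rw [hni, pow_add]

lemma sum_range_choose_mul_pow_le_one {p : ℝ} (hp : 0 ≤ p) (hp1 : p ≤ 1) {n k : ℕ}
    (hkn : k ≤ n) :
    ∑ i ∈ range (k + 1), (n.choose i : ℝ) * (p ^ i * (1 - p) ^ (n - i)) ≤ 1 := by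
  have hq : 0 ≤ 1 - p := by linarith
  calc ∑ i ∈ range (k + 1), (n.choose i : ℝ) * (p ^ i * (1 - p) ^ (n - i))
      ≤ ∑ i ∈ range (n + 1), (n.choose i : ℝ) * (p ^ i * (1 - p) ^ (n - i)) :=
        sum_le_sum_of_subset_of_nonneg (range_subset_range.2 (by omega))
          fun _ _ _ ↦ by positivity
    _ = (p + (1 - p)) ^ n := by rw [add_pow]; exact sum_congr rfl fun _ _ ↦ by ring
    _ = 1 := by simp

lemma sum_range_choose_mul_pow_le {p : ℝ} (hp : 0 ≤ p) (hpq : p ≤ 1 - p) {n k : ℕ}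
    (hkn : k ≤ n) :
    (∑ i ∈ range (k + 1), (n.choose i : ℝ)) * (p ^ k * (1 - p) ^ (n - k)) ≤ 1 := by
  rw [sum_mul]
  refine (sum_le_sum fun i hi ↦ ?_).trans
    (sum_range_choose_mul_pow_le_one hp (by linarith) hkn)
  exact mul_le_mul_of_nonneg_left
    (pow_mul_one_sub_pow_le_of_le hp hpq (mem_range_succ_iff.1 hi) hkn)
    (Nat.cast_nonneg _)

lemma two_rpow_binH_div_mul {n k : ℕ} (hk : 0 < k) (hkn : k < n) :
    (2 : ℝ) ^ (binH ((k : ℝ) / n) * n) =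
      (((k : ℝ) / n) ^ k * (1 - (k : ℝ) / n) ^ (n - k))⁻¹ := by
  have hn : (0 : ℝ) < n := by exact_mod_cast hk.trans hkn
  set p : ℝ := (k : ℝ) / n with hp_def
  have hp : 0 < p := by positivity
  have hq : 0 < 1 - p := by
    rw [sub_pos, div_lt_one hn]
    exact_mod_cast hkn
  have hpn : p * n = k := by rw [hp_def]; field_simp
  have hqn : (1 - p) * n = ((n - k : ℕ) : ℝ) := by
    rw [Nat.cast_sub hkn.le, hp_def]
    field_simp
  have hexp : binH p * n =
      Real.logb 2 p * (-(k : ℝ)) + Real.logb 2 (1 - p) * (-((n - k : ℕ) : ℝ)) := by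
    rw [← hpn, ← hqn, binH]
    ring
  rw [hexp, Real.rpow_add two_pos, Real.rpow_mul zero_le_two, Real.rpow_mul zero_le_two,
    Real.rpow_logb two_pos (by norm_num) hp, Real.rpow_logb two_pos (by norm_num) hq,
    Real.rpow_neg hp.le, Real.rpow_neg hq.le, Real.rpow_natCast, Real.rpow_natCast, mul_inv]

theorem stmt2_general (n k : ℕ) (hk : k ≤ n / 2) :
    (∑ i ∈ Finset.range (k + 1), (n.choose i : ℝ)) ≤
      (2 : ℝ) ^ (binH ((k : ℝ) / (n : ℝ)) * (n : ℝ)) := by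
  rcases Nat.eq_zero_or_pos k with rfl | hk0
  · simp [binH]
  have hn : (0 : ℝ) < n := by exact_mod_cast (show 0 < n by omega)
  have hpq : (k : ℝ) / n ≤ 1 - (k : ℝ) / n := by
    have h2k : (2 * k : ℝ) ≤ n := by exact_mod_cast (show 2 * k ≤ n by omega)
    rw [le_sub_iff_add_le, ← add_div, div_le_one hn]
    linarith
  have hq : 0 < 1 - (k : ℝ) / n := by linarith [div_pos (Nat.cast_pos.2 hk0) hn]
  rw [two_rpow_binH_div_mul hk0 (by omega), ← one_div, le_div_iff₀ (by positivity)]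
  exact sum_range_choose_mul_pow_le (by positivity) hpq (by omega)

theorem stmt2 (n k : ℕ) (hn : 0 < n) (hk : k ≤ n / 2) :
    (∑ i ∈ Finset.range (k + 1), (n.choose i : ℝ)) ≤
      (2 : ℝ) ^ (binH ((k : ℝ) / (n : ℝ)) * (n : ℝ)) :=
  stmt2_general n k hk
end

section
/- Let f, g : {0,1}^n → {0,1}, let 0 ≤ k ≤ n/2, and ζ > 0. For S ⊆ {1,…,n}, define F_S(x) = f(x) ∧ (g(x) ⊕ ⊕_{i∈S} x_i). Then with probability at least 1 - 2^{-n + H(k/n)n + 2ζn} over a uniformly random S ⊆ {1,…,n}, every T with |T| ≤ k satisfies |F̂_S(T) - (1/2)f̂(T)| ≤ 2^{-ζn-1}. -/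
/-!
With `h = f · (-1)^g` one has `F_S = f/2 - h χ_S/2`, hence `F̂_S(T) - f̂(T)/2 = -ĥ(S ∆ T)/2`.
So `S` can fail only if `S ∆ T` is a heavy coefficient of `h` (`|ĥ| > 2^{-ζn}`) for some
`|T| ≤ k`. By Parseval `h` has at most `2^{2ζn}` heavy coefficients, and weighting each `T` by
`p^|T| (1-p)^(n-|T|)` with `p = k/n ≤ 1/2` shows the Hamming ball has at most `2^{H(k/n) n}`
points; so at most `2^{2ζn + H(k/n) n}` sets `S` fail.
-/

open scoped Classical

/-- Fourier coefficient of `h : {0,1}^n → ℝ` at `T`. -/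
noncomputable def bFourier {n : ℕ} (h : (Fin n → Bool) → ℝ) (T : Finset (Fin n)) : ℝ :=
  (∑ x : Fin n → Bool, h x * (-1 : ℝ) ^ (T.filter fun i => x i).card) / 2 ^ n

/-- `{0,1}`-valued function as a real function. -/
def b2r {n : ℕ} (h : (Fin n → Bool) → Bool) : (Fin n → Bool) → ℝ :=
  fun x => if h x then 1 else 0

open Finset
open scoped symmDiff

def boolSign (b : Bool) : ℝ := if b then -1 else 1

lemma boolSign_mul_self (b : Bool) : boolSign b * boolSign b = 1 := by
  cases b <;> norm_num [boolSign]

lemma one_add_boolSign_mul_boolSign (b c : Bool) :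
    1 + boolSign b * boolSign c = if b = c then 2 else 0 := by
  cases b <;> cases c <;> norm_num [boolSign]

lemma neg_one_pow_eq_boolSign_bodd (m : ℕ) : (-1 : ℝ) ^ m = boolSign m.bodd := by
  induction m with
  | zero => simp [boolSign]
  | succ m ih => cases h : m.bodd <;> simp_all [pow_succ, boolSign]

section Walsh

variable {n : ℕ}

noncomputable def walsh (U : Finset (Fin n)) (x : Fin n → Bool) : ℝ :=
  ∏ i ∈ U, boolSign (x i)

lemma walsh_eq_neg_one_pow (U : Finset (Fin n)) (x : Fin n → Bool) :
    walsh U x = (-1 : ℝ) ^ (U.filter fun i => x i).card := by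
  simp only [walsh, boolSign, prod_ite, prod_const, one_pow, mul_one]

lemma walsh_mul_walsh (S T : Finset (Fin n)) (x : Fin n → Bool) :
    walsh S x * walsh T x = walsh (S ∆ T) x := by
  have hS := prod_inter_mul_prod_sdiff S T fun i => boolSign (x i)
  have hT := prod_inter_mul_prod_sdiff T S fun i => boolSign (x i)
  rw [inter_comm] at hT
  have hsq : (∏ i ∈ S ∩ T, boolSign (x i)) * ∏ i ∈ S ∩ T, boolSign (x i) = 1 := by
    rw [← prod_mul_distrib]
    exact prod_eq_one fun i _ => boolSign_mul_self (x i)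
  rw [walsh, walsh, walsh, symmDiff_def, sup_eq_union, prod_union disjoint_sdiff_sdiff,
    ← hS, ← hT]
  linear_combination (∏ i ∈ S \ T, boolSign (x i)) * (∏ i ∈ T \ S, boolSign (x i)) * hsq

lemma sum_walsh_mul_walsh (x y : Fin n → Bool) :
    ∑ U, walsh U x * walsh U y = if x = y then 2 ^ n else 0 := by
  have hprod : ∑ U, walsh U x * walsh U y = ∏ i, (1 + boolSign (x i) * boolSign (y i)) := by
    rw [prod_one_add, powerset_univ]
    simp only [walsh, prod_mul_distrib]
  rw [hprod]
  simp only [one_add_boolSign_mul_boolSign]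
  split_ifs with hxy
  · simp [hxy]
  · obtain ⟨i, hi⟩ := Function.ne_iff.mp hxy
    exact prod_eq_zero (mem_univ i) (if_neg hi)

lemma bFourier_eq_sum_walsh (h : (Fin n → Bool) → ℝ) (U : Finset (Fin n)) :
    bFourier h U = (∑ x, h x * walsh U x) / 2 ^ n := by
  simp only [bFourier, walsh_eq_neg_one_pow]

lemma sum_sq_bFourier (h : (Fin n → Bool) → ℝ) :
    ∑ U, bFourier h U ^ 2 = (∑ x, h x ^ 2) / 2 ^ n := by
  have hsq : ∑ U, (∑ x, h x * walsh U x) ^ 2 = 2 ^ n * ∑ x, h x ^ 2 := by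
    calc ∑ U, (∑ x, h x * walsh U x) ^ 2
        = ∑ U, ∑ x, ∑ y, h x * h y * (walsh U x * walsh U y) := by
          simp only [sq, sum_mul_sum]
          exact sum_congr rfl fun U _ => sum_congr rfl fun x _ => sum_congr rfl fun y _ => by ring
      _ = ∑ x, ∑ y, h x * h y * ∑ U, walsh U x * walsh U y := by
          simp only [mul_sum]
          rw [sum_comm]
          exact sum_congr rfl fun x _ => sum_comm
      _ = 2 ^ n * ∑ x, h x ^ 2 := by
          simp only [sum_walsh_mul_walsh, mul_ite, mul_zero, sum_ite_eq, mem_univ, if_true,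
            mul_sum]
          exact sum_congr rfl fun x _ => by ring
  simp only [bFourier_eq_sum_walsh, div_pow, ← sum_div, hsq]
  field_simp

lemma sum_sq_bFourier_le_one {h : (Fin n → Bool) → ℝ} (hb : ∀ x, h x ^ 2 ≤ 1) :
    ∑ U, bFourier h U ^ 2 ≤ 1 := by
  rw [sum_sq_bFourier, div_le_one (by positivity)]
  simpa using sum_le_sum fun x (_ : x ∈ univ) => hb x

lemma bFourier_mul_walsh (h : (Fin n → Bool) → ℝ) (S T : Finset (Fin n)) :
    bFourier (fun x => h x * walsh S x) T = bFourier h (S ∆ T) := by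
  simp only [bFourier_eq_sum_walsh, mul_assoc, walsh_mul_walsh]

lemma bFourier_sub (h₁ h₂ : (Fin n → Bool) → ℝ) (T : Finset (Fin n)) :
    bFourier (h₁ - h₂) T = bFourier h₁ T - bFourier h₂ T := by
  simp only [bFourier, Pi.sub_apply, sub_mul, sum_sub_distrib, sub_div]

lemma bFourier_const_mul (c : ℝ) (h : (Fin n → Bool) → ℝ) (T : Finset (Fin n)) :
    bFourier (fun x => c * h x) T = c * bFourier h T := by
  simp only [bFourier, mul_assoc, ← mul_sum, mul_div_assoc]

end Walsh

lemma ite_and_bne_eq (a b c : Bool) :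
    (if (a && (b != c)) then (1 : ℝ) else 0)
      = 1 / 2 * (if a then 1 else 0)
        - 1 / 2 * ((if a then 1 else 0) * boolSign b * boolSign c) := by
  cases a <;> cases b <;> cases c <;> norm_num [boolSign]

-- The paper's `F_S`, before casting to `ℝ`.
def andXorParity {n : ℕ} (f g : (Fin n → Bool) → Bool) (S : Finset (Fin n)) :
    (Fin n → Bool) → Bool :=
  fun x => f x && (g x != (S.filter fun i => x i).card.bodd)

lemma b2r_andXorParity {n : ℕ} (f g : (Fin n → Bool) → Bool) (S : Finset (Fin n)) :
    b2r (andXorParity f g S)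
      = (fun x => 1 / 2 * b2r f x) - fun x => 1 / 2 * (b2r f x * boolSign (g x) * walsh S x) := by
  funext x
  rw [Pi.sub_apply, walsh_eq_neg_one_pow, neg_one_pow_eq_boolSign_bodd]
  exact ite_and_bne_eq _ _ _

lemma bFourier_andXorParity_sub_half {n : ℕ} (f g : (Fin n → Bool) → Bool)
    (S T : Finset (Fin n)) :
    bFourier (b2r (andXorParity f g S)) T - 1 / 2 * bFourier (b2r f) T
      = -(1 / 2 * bFourier (fun x => b2r f x * boolSign (g x)) (S ∆ T)) := by
  rw [b2r_andXorParity, bFourier_sub, bFourier_const_mul, bFourier_const_mul,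
    bFourier_mul_walsh (fun x => b2r f x * boolSign (g x))]
  ring

lemma card_filter_lt_abs_mul_sq_le {ι : Type*} (s : Finset ι) (a : ι → ℝ) {c : ℝ}
    (hc : 0 ≤ c) :
    (s.filter fun i => c < |a i|).card * c ^ 2 ≤ ∑ i ∈ s, a i ^ 2 := by
  calc (s.filter fun i => c < |a i|).card * c ^ 2
      ≤ ∑ i ∈ s.filter fun i => c < |a i|, a i ^ 2 := by
        rw [← nsmul_eq_mul]
        refine card_nsmul_le_sum _ _ _ fun i hi => ?_
        rw [← sq_abs (a i)]
        exact pow_le_pow_left₀ hc (mem_filter.mp hi).2.le 2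
    _ ≤ ∑ i ∈ s, a i ^ 2 :=
        sum_le_sum_of_subset_of_nonneg (filter_subset _ _) fun i _ _ => sq_nonneg _

lemma card_lt_abs_bFourier_le {n : ℕ} {h : (Fin n → Bool) → ℝ} (hb : ∀ x, h x ^ 2 ≤ 1)
    (t : ℝ) :
    ((univ.filter fun U => (2 : ℝ) ^ (-t) < |bFourier h U|).card : ℝ) ≤ 2 ^ (2 * t) := by
  have hcard := (card_filter_lt_abs_mul_sq_le univ (bFourier h)
    (Real.rpow_nonneg two_pos.le (-t))).trans (sum_sq_bFourier_le_one hb)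
  have hsq : ((2 : ℝ) ^ (-t)) ^ 2 = (2 ^ (2 * t))⁻¹ := by
    rw [← Real.rpow_natCast, ← Real.rpow_mul two_pos.le, ← Real.rpow_neg two_pos.le]
    ring_nf
  rwa [hsq, ← div_eq_mul_inv, div_le_one (by positivity)] at hcard

lemma two_pow_sub_card_mul_card_le_card_filter {n : ℕ} {P : Finset (Fin n) → Prop}
    [DecidablePred P] (A B : Finset (Finset (Fin n)))
    (hP : ∀ S, ¬P S → ∃ T ∈ B, S ∆ T ∈ A) :
    (2 : ℝ) ^ n - A.card * B.card ≤ (univ.filter P).card := by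
  have hbad : (univ.filter P)ᶜ ⊆ image₂ (· ∆ ·) A B := by
    intro S hS
    obtain ⟨T, hT, hST⟩ := hP S (by simpa using hS)
    exact mem_image₂.mpr ⟨S ∆ T, hST, T, hT, symmDiff_symmDiff_cancel_right T S⟩
  have hcount : 2 ^ n ≤ (univ.filter P).card + A.card * B.card := by
    calc 2 ^ n = (univ.filter P).card + (univ.filter P)ᶜ.card := by
          rw [card_add_card_compl, Fintype.card_finset, Fintype.card_fin]
      _ ≤ (univ.filter P).card + A.card * B.card :=
          Nat.add_le_add_left ((card_le_card hbad).trans (card_image₂_le _ _ _)) _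
  rw [sub_le_iff_le_add]
  exact_mod_cast hcount

lemma pow_mul_pow_sub_le_pow_mul_pow_sub {p q : ℝ} (hp : 0 ≤ p) (hpq : p ≤ q) {j k n : ℕ}
    (hjk : j ≤ k) (hkn : k ≤ n) : p ^ k * q ^ (n - k) ≤ p ^ j * q ^ (n - j) := by
  obtain ⟨a, rfl⟩ := Nat.exists_eq_add_of_le hjk
  obtain ⟨b, rfl⟩ := Nat.exists_eq_add_of_le hkn
  rw [show j + a + b - (j + a) = b by omega, show j + a + b - j = a + b by omega,
    pow_add, pow_add, mul_assoc]
  have := hp.trans hpq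
  gcongr

lemma card_ball_mul_pow_le_one {p q : ℝ} (hp : 0 ≤ p) (hpq : p ≤ q) (hsum : p + q = 1)
    {n k : ℕ} (hkn : k ≤ n) :
    ((univ.filter fun T : Finset (Fin n) => T.card ≤ k).card : ℝ) * (p ^ k * q ^ (n - k))
      ≤ 1 := by
  calc ((univ.filter fun T : Finset (Fin n) => T.card ≤ k).card : ℝ) * (p ^ k * q ^ (n - k))
      ≤ ∑ T ∈ univ.filter fun T : Finset (Fin n) => T.card ≤ k,
          p ^ T.card * q ^ (n - T.card) := by
        rw [← nsmul_eq_mul]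
        exact card_nsmul_le_sum _ _ _ fun T hT =>
          pow_mul_pow_sub_le_pow_mul_pow_sub hp hpq (mem_filter.mp hT).2 hkn
    _ ≤ ∑ T : Finset (Fin n), p ^ T.card * q ^ (n - T.card) :=
        sum_le_sum_of_subset_of_nonneg (filter_subset _ _) fun T _ _ => by
          have := hp.trans hpq
          positivity
    _ = 1 := by rw [Fin.sum_pow_mul_eq_add_pow, hsum, one_pow]

lemma pow_mul_pow_sub_eq_two_rpow_neg_binH {n k : ℕ} (hk : 0 < k) (hkn : k < n) :
    ((k : ℝ) / n) ^ k * (1 - k / n) ^ (n - k) = 2 ^ (-(binH ((k : ℝ) / n) * n)) := by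
  have hn : (0 : ℝ) < n := by exact_mod_cast hk.trans hkn
  have hp : (0 : ℝ) < k / n := by positivity
  have hq : (0 : ℝ) < 1 - k / n := by
    rw [sub_pos, div_lt_one hn]
    exact_mod_cast hkn
  have hexp : -(binH ((k : ℝ) / n) * n)
      = Real.logb 2 (k / n) * k + Real.logb 2 (1 - k / n) * ((n - k : ℕ) : ℝ) := by
    rw [binH, Nat.cast_sub hkn.le]
    field_simp
    ring
  rw [hexp, Real.rpow_add two_pos, Real.rpow_mul two_pos.le, Real.rpow_mul two_pos.le,
    Real.rpow_logb two_pos (by norm_num) hp, Real.rpow_logb two_pos (by norm_num) hq,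
    Real.rpow_natCast, Real.rpow_natCast]

lemma card_ball_le_two_rpow_binH {n k : ℕ} (hk : 2 * k ≤ n) :
    ((univ.filter fun T : Finset (Fin n) => T.card ≤ k).card : ℝ)
      ≤ 2 ^ (binH ((k : ℝ) / n) * n) := by
  rcases Nat.eq_zero_or_pos k with rfl | hk0
  · simp [binH, card_eq_zero, filter_eq']
  have hn : (0 : ℝ) < n := by exact_mod_cast (show 0 < n by omega)
  have hpq : (k : ℝ) / n ≤ 1 - k / n := by
    rw [le_sub_iff_add_le, ← add_div, div_le_one hn]
    exact_mod_cast (show k + k ≤ n by omega)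
  have hball := card_ball_mul_pow_le_one (by positivity) hpq (add_sub_cancel _ _)
    (show k ≤ n by omega)
  rw [pow_mul_pow_sub_eq_two_rpow_neg_binH hk0 (by omega), Real.rpow_neg two_pos.le,
    ← div_eq_mul_inv, div_le_one (by positivity)] at hball
  exact hball

theorem stmt6_general {n : ℕ} (f g : (Fin n → Bool) → Bool) (k : ℕ) (hk : (k : ℝ) ≤ n / 2)
    (ζ : ℝ) :
    (1 - (2 : ℝ) ^ (-(n : ℝ) + binH ((k : ℝ) / n) * n + 2 * ζ * n)) * 2 ^ n ≤
      ((Finset.univ.filter fun S : Finset (Fin n) =>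
          ∀ T : Finset (Fin n), T.card ≤ k →
            |bFourier (b2r fun x => f x && (g x != (S.filter fun i => x i).card.bodd)) T
                - (1 / 2) * bFourier (b2r f) T| ≤ (2 : ℝ) ^ (-ζ * n - 1)).card : ℝ) := by
  set h : (Fin n → Bool) → ℝ := fun x => b2r f x * boolSign (g x)
  have hheavy := card_lt_abs_bFourier_le (h := h)
    (fun x => by simp only [h, b2r, boolSign]; split_ifs <;> norm_num) (ζ * n)
  have hball : ((univ.filter fun T : Finset (Fin n) => T.card ≤ k).card : ℝ)
      ≤ 2 ^ (binH ((k : ℝ) / n) * n) :=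
    card_ball_le_two_rpow_binH (by exact_mod_cast (by linarith : (2 * k : ℝ) ≤ n))
  have hhalf : (2 : ℝ) ^ (-ζ * n - 1) = 2 ^ (-(ζ * n)) / 2 := by
    rw [sub_eq_add_neg, Real.rpow_add two_pos, Real.rpow_neg_one, neg_mul, div_eq_mul_inv]
  have hsplit : (1 - (2 : ℝ) ^ (-(n : ℝ) + binH ((k : ℝ) / n) * n + 2 * ζ * n)) * 2 ^ n
      = 2 ^ n - 2 ^ (2 * (ζ * n)) * 2 ^ (binH ((k : ℝ) / n) * n) := by
    rw [← Real.rpow_natCast, Real.rpow_add two_pos, Real.rpow_add two_pos,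
      Real.rpow_neg two_pos.le, mul_assoc]
    field_simp
  rw [hsplit]
  refine le_trans (sub_le_sub_left (mul_le_mul hheavy hball (by positivity) (by positivity)) _)
    (two_pow_sub_card_mul_card_le_card_filter _ _ fun S hS => ?_)
  push Not at hS
  obtain ⟨T, hT, hlarge⟩ := hS
  refine ⟨T, mem_filter.mpr ⟨mem_univ T, hT⟩, mem_filter.mpr ⟨mem_univ _, ?_⟩⟩
  have hdiff := bFourier_andXorParity_sub_half f g S T
  unfold andXorParity at hdiff
  rw [hdiff, abs_neg, abs_mul, abs_of_pos one_half_pos, hhalf] at hlarge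
  linarith

theorem stmt6 {n : ℕ} (f g : (Fin n → Bool) → Bool) (k : ℕ) (hk : (k : ℝ) ≤ n / 2)
    (ζ : ℝ) (hζ : 0 < ζ) :
    (1 - (2 : ℝ) ^ (-(n : ℝ) + binH ((k : ℝ) / n) * n + 2 * ζ * n)) * 2 ^ n ≤
      ((Finset.univ.filter fun S : Finset (Fin n) =>
          ∀ T : Finset (Fin n), T.card ≤ k →
            |bFourier (b2r fun x => f x && (g x != (S.filter fun i => x i).card.bodd)) T
                - (1 / 2) * bFourier (b2r f) T| ≤ (2 : ℝ) ^ (-ζ * n - 1)).card : ℝ) :=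
  stmt6_general f g k hk ζ
end

section
/- Fix an integer k ≥ 0 and reals ε, ζ ∈ (0, 1/2). Choose S₀, S₁, …, S_k ⊆ {1,…,n} uniformly and independently at random. Fix an integer s and define f : {0,1}^n → {0,1} by f(x) = 1 iff Σ_{i=0}^{k} 2^i Σ_{j∈S_i} x_j ≡ s (mod 2^{k+1}). Then with probability at least 1 - (k+1)·2^{-n + H(ε)n + 2ζn}, for every T with |T| ≤ εn one has |f̂(T) - 2^{-(k+1)}·δ_{T,∅}| ≤ 2^{-ζn}. -/
open scoped Classical

/-!
Identify a choice of `S₀, …, S_k` with the vector `g ∈ (ℤ/2^{k+1})ⁿ` whose `j`-th entry has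
binary digits `[j ∈ S_i]`; then `f(x) = 1` iff `∑_{x_j = 1} g_j = s`. For uniform `g` and `x ≠ 0`
this event has probability `2^{-(k+1)}`, and for distinct `x, y ≠ 0` the two events are
independent, because `g ↦ (∑_{x_j=1} g_j, ∑_{y_j=1} g_j)` is a surjective homomorphism. So the
centred values `f(x) - 2^{-(k+1)}` are pairwise uncorrelated (the constant `f(0)` included), which
gives `E[(f̂(T) - 2^{-(k+1)} δ_{T,∅})²] ≤ 2^{-n}` for every `T`. Chebyshev bounds the probability
that a given `T` fails by `2^{-n+2ζn}`, and a union bound over the at most `2^{H(ε)n}` sets with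
`|T| ≤ εn` finishes the proof.
-/

open Finset

theorem AddMonoidHom.card_fiber_mul_card_of_surjective {M N : Type*} [AddGroup M] [Fintype M]
    [AddMonoid N] [Fintype N] [DecidableEq N] (f : M →+ N) (hf : Function.Surjective f)
    (c : N) : #{m | f m = c} * Fintype.card N = Fintype.card M := by
  have hfib : ∀ c', #{m | f m = c'} = #{m | f m = c} := fun c' =>
    AddMonoidHom.card_fiber_eq_of_mem_range f (hf c') (hf c)
  rw [← card_univ (α := M), card_eq_sum_card_fiberwise (f := f) (s := univ) (t := univ) (by simp),
    sum_congr rfl fun c' _ => hfib c', sum_const, card_univ, smul_eq_mul, mul_comm]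

section SumOn

variable {ι G : Type*} [AddCommGroup G]

def sumOn (A : Finset ι) : (ι → G) →+ G := ∑ j ∈ A, Pi.evalAddMonoidHom (fun _ => G) j

@[simp]
lemma sumOn_apply (A : Finset ι) (g : ι → G) : sumOn A g = ∑ j ∈ A, g j := by
  simp [sumOn, AddMonoidHom.finsetSum_apply]

@[simp]
lemma sumOn_empty : sumOn (∅ : Finset ι) = (0 : (ι → G) →+ G) := by
  simp [sumOn]

lemma sumOn_single (A : Finset ι) (j : ι) (c : G) :
    sumOn A (Pi.single j c) = if j ∈ A then c else 0 := by
  simp [Pi.single_apply]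

lemma sumOn_surjective {A : Finset ι} (hA : A.Nonempty) :
    Function.Surjective (sumOn A : (ι → G) → G) := by
  obtain ⟨j, hj⟩ := hA
  exact fun c => ⟨Pi.single j c, by rw [sumOn_single, if_pos hj]⟩

lemma sumOn_prod_surjective_of_mem_of_notMem {A B : Finset ι} {j₀ j₁ : ι}
    (hj₀A : j₀ ∈ A) (hj₀B : j₀ ∉ B) (hj₁B : j₁ ∈ B) :
    Function.Surjective ((sumOn A).prod (sumOn B) : (ι → G) → G × G) := by
  intro ⟨c, d⟩
  obtain ⟨a, ha⟩ : ∃ a : G, (if j₁ ∈ A then d else 0) + a = c := ⟨_, add_sub_cancel _ c⟩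
  refine ⟨Pi.single j₁ d + Pi.single j₀ a, ?_⟩
  simp only [AddMonoidHom.prod_apply, map_add, sumOn_single, if_pos hj₀A, if_neg hj₀B,
    if_pos hj₁B, Prod.mk_add_mk, ha, add_zero]

lemma sumOn_prod_surjective {A B : Finset ι} (hA : A.Nonempty) (hB : B.Nonempty)
    (hAB : A ≠ B) : Function.Surjective ((sumOn A).prod (sumOn B) : (ι → G) → G × G) := by
  by_cases hsub : A ⊆ B
  · obtain ⟨j₀, hj₀B, hj₀A⟩ := not_subset.mp fun h => hAB (subset_antisymm hsub h)
    obtain ⟨j₁, hj₁A⟩ := hA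
    have := sumOn_prod_surjective_of_mem_of_notMem (G := G) hj₀B hj₀A hj₁A
    exact fun p => (this p.swap).imp fun g hg => by simpa using congrArg Prod.swap hg
  · obtain ⟨j₀, hj₀A, hj₀B⟩ := not_subset.mp hsub
    obtain ⟨j₁, hj₁B⟩ := hB
    exact sumOn_prod_surjective_of_mem_of_notMem hj₀A hj₀B hj₁B

variable [Fintype ι] [Fintype G] [DecidableEq G]

lemma sum_indicator_sumOn {A : Finset ι} (hA : A.Nonempty) (c : G) :
    ∑ g : ι → G, (if sumOn A g = c then 1 else 0 : ℝ) =
      Fintype.card (ι → G) / Fintype.card G := by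
  rw [sum_boole, eq_div_iff (by simp), ← AddMonoidHom.card_fiber_mul_card_of_surjective _
    (sumOn_surjective hA) c, Nat.cast_mul]

lemma sum_indicator_sumOn_mul_indicator_sumOn {A B : Finset ι} (hA : A.Nonempty)
    (hB : B.Nonempty) (hAB : A ≠ B) (c d : G) :
    ∑ g : ι → G, (if sumOn A g = c then 1 else 0 : ℝ) * (if sumOn B g = d then 1 else 0) =
      Fintype.card (ι → G) / Fintype.card G ^ 2 := by
  have hfib := AddMonoidHom.card_fiber_mul_card_of_surjective _
    (sumOn_prod_surjective (G := G) hA hB hAB) (c, d)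
  simp only [AddMonoidHom.prod_apply, Prod.mk.injEq, Fintype.card_prod] at hfib
  simp only [ite_zero_mul_ite_zero, mul_one]
  rw [sum_boole, eq_div_iff (by simp), ← hfib]
  push_cast
  ring

lemma sum_indicator_sumOn_sub_inv_card {A : Finset ι} (hA : A.Nonempty) (c : G) :
    ∑ g : ι → G, ((if sumOn A g = c then 1 else 0 : ℝ) - (Fintype.card G : ℝ)⁻¹) = 0 := by
  rw [sum_sub_distrib, sum_indicator_sumOn hA, sum_const, card_univ, nsmul_eq_mul,
    div_eq_mul_inv, sub_self]

lemma sum_indicator_sumOn_sub_mul_eq_zero {A B : Finset ι} (hAB : A ≠ B) (c : G) :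
    ∑ g : ι → G, ((if sumOn A g = c then 1 else 0 : ℝ) - (Fintype.card G : ℝ)⁻¹) *
      ((if sumOn B g = c then 1 else 0 : ℝ) - (Fintype.card G : ℝ)⁻¹) = 0 := by
  rcases A.eq_empty_or_nonempty with rfl | hA
  · simp only [sumOn_empty, AddMonoidHom.zero_apply]
    rw [← mul_sum, sum_indicator_sumOn_sub_inv_card (nonempty_iff_ne_empty.mpr hAB.symm), mul_zero]
  rcases B.eq_empty_or_nonempty with rfl | hB
  · simp only [sumOn_empty, AddMonoidHom.zero_apply]
    rw [← sum_mul, sum_indicator_sumOn_sub_inv_card hA, zero_mul]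
  simp only [sub_mul, mul_sub, sum_sub_distrib, ← sum_mul, ← mul_sum,
    sum_indicator_sumOn_mul_indicator_sumOn hA hB hAB, sum_indicator_sumOn hA,
    sum_indicator_sumOn hB, sum_const, card_univ, nsmul_eq_mul]
  field_simp
  ring

end SumOn

section BinaryColumn

variable {ι : Type*} [Fintype ι]

noncomputable def binaryColumn (m : ℕ) (S : Fin m → Finset ι) (j : ι) : ZMod (2 ^ m) :=
  ∑ i, if j ∈ S i then 2 ^ (i : ℕ) else 0

lemma binaryColumn_surjective (m : ℕ) :
    Function.Surjective (binaryColumn (ι := ι) m) := by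
  intro g
  let digits : ι → Fin m → Fin 2 := fun j => finFunctionFinEquiv.symm ⟨(g j).val, ZMod.val_lt _⟩
  refine ⟨fun i => {j | digits j i = 1}, funext fun j => ?_⟩
  have hdigits := congrArg Fin.val
    (finFunctionFinEquiv.apply_symm_apply (⟨(g j).val, ZMod.val_lt _⟩ : Fin (2 ^ m)))
  simp only [finFunctionFinEquiv_apply] at hdigits
  have hbit : ∀ (b : Fin 2) (i : Fin m), (if b = 1 then (2 : ZMod (2 ^ m)) ^ (i : ℕ) else 0) =
      ((b : ℕ) : ZMod (2 ^ m)) * 2 ^ (i : ℕ) := by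
    intro b i
    fin_cases b <;> simp
  simp only [binaryColumn, mem_filter, mem_univ, true_and, hbit]
  rw [← ZMod.natCast_zmod_val (g j), ← hdigits]
  push_cast
  rfl

lemma binaryColumn_bijective (m : ℕ) :
    Function.Bijective (binaryColumn (ι := ι) m) := by
  refine (Fintype.bijective_iff_surjective_and_card _).mpr ⟨binaryColumn_surjective m, ?_⟩
  simp only [Fintype.card_fun, Fintype.card_finset, Fintype.card_fin, ZMod.card, ← pow_mul,
    mul_comm]

lemma intCast_sum_two_pow_mul_eq_sumOn_binaryColumn (m : ℕ) (S : Fin m → Finset ι)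
    (x : ι → Bool) :
    ((∑ i : Fin m, 2 ^ (i : ℕ) * ∑ j ∈ S i, (if x j then (1 : ℤ) else 0) : ℤ) : ZMod (2 ^ m)) =
      sumOn {j | x j} (binaryColumn m S) := by
  push_cast
  calc ∑ i : Fin m, 2 ^ (i : ℕ) * ∑ j ∈ S i, (if x j then (1 : ZMod (2 ^ m)) else 0)
      = ∑ i : Fin m, ∑ j, if j ∈ S i then 2 ^ (i : ℕ) * (if x j then 1 else 0) else 0 := by
        simp only [mul_sum, sum_ite_mem, univ_inter]
    _ = ∑ j, ∑ i : Fin m, if j ∈ S i then 2 ^ (i : ℕ) * (if x j then 1 else 0) else 0 := sum_comm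
    _ = sumOn {j | x j} (binaryColumn m S) := by
        rw [sumOn_apply, sum_filter]
        refine sum_congr rfl fun j _ => ?_
        by_cases hj : x j <;> simp [hj, binaryColumn]

lemma sum_indicator_binaryColumn_sub_mul_eq_zero (m : ℕ) {x y : ι → Bool} (hxy : x ≠ y)
    (c : ZMod (2 ^ m)) :
    ∑ S : Fin m → Finset ι,
      ((if sumOn {j | x j} (binaryColumn m S) = c then 1 else 0 : ℝ) - ((2 : ℝ) ^ m)⁻¹) *
      ((if sumOn {j | y j} (binaryColumn m S) = c then 1 else 0 : ℝ) - ((2 : ℝ) ^ m)⁻¹) = 0 := by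
  have hxy' : filter (fun j => x j) univ ≠ filter (fun j => y j) univ := fun h =>
    hxy <| funext fun j => by simpa using congrArg (j ∈ ·) h
  have hcov := sum_indicator_sumOn_sub_mul_eq_zero hxy' c
  rw [ZMod.card, Nat.cast_pow, Nat.cast_ofNat] at hcov
  exact (Fintype.sum_bijective _ (binaryColumn_bijective m) _ _ fun _ => rfl).trans hcov

end BinaryColumn

lemma sum_neg_one_pow_card_filter {ι : Type*} [Fintype ι] [DecidableEq ι] (T : Finset ι) :
    ∑ x : ι → Bool, (-1 : ℝ) ^ #(T.filter fun i => x i) =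
      if T = ∅ then 2 ^ Fintype.card ι else 0 := by
  have hprod : ∀ x : ι → Bool, (-1 : ℝ) ^ #(T.filter fun i => x i) =
      ∏ i, if i ∈ T then (if x i then -1 else 1) else 1 := by
    intro x
    rw [prod_ite_mem, univ_inter, prod_ite, prod_const_one, mul_one, prod_const]
  simp only [hprod]
  rw [← Fintype.prod_sum (fun i (b : Bool) => if i ∈ T then (if b then (-1 : ℝ) else 1) else 1)]
  split_ifs with hT
  · simp [hT]
  · obtain ⟨i, hi⟩ := nonempty_iff_ne_empty.mpr hT
    exact prod_eq_zero (mem_univ i) (by simp [hi])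

lemma bFourier_sub_const {n : ℕ} (h : (Fin n → Bool) → ℝ) (q : ℝ) (T : Finset (Fin n)) :
    bFourier (fun x => h x - q) T = bFourier h T - if T = ∅ then q else 0 := by
  simp only [bFourier, sub_mul, sum_sub_distrib, ← mul_sum, sum_neg_one_pow_card_filter,
    Fintype.card_fin]
  split_ifs <;> simp [sub_div]

lemma sum_sq_sum_mul_eq_of_orthogonal {Ω X : Type*} [Fintype Ω] [Fintype X]
    (D : Ω → X → ℝ) (hD : ∀ x y, x ≠ y → ∑ ω, D ω x * D ω y = 0) (a : X → ℝ) :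
    ∑ ω, (∑ x, D ω x * a x) ^ 2 = ∑ x, a x ^ 2 * ∑ ω, D ω x ^ 2 := by
  calc ∑ ω, (∑ x, D ω x * a x) ^ 2
      = ∑ x, ∑ y, a x * a y * ∑ ω, D ω x * D ω y := by
        simp_rw [sq, sum_mul_sum, mul_sum]
        rw [sum_comm]
        refine sum_congr rfl fun x _ => ?_
        rw [sum_comm]
        exact sum_congr rfl fun y _ => sum_congr rfl fun ω _ => by ring
    _ = ∑ x, a x ^ 2 * ∑ ω, D ω x ^ 2 := by
        refine sum_congr rfl fun x _ => ?_
        rw [sum_eq_single x (fun y _ hyx => by rw [hD x y hyx.symm, mul_zero]) (by simp)]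
        simp only [sq]

lemma sum_sq_bFourier_le {Ω : Type*} [Fintype Ω] {n : ℕ} (D : Ω → (Fin n → Bool) → ℝ)
    (hD : ∀ x y, x ≠ y → ∑ ω, D ω x * D ω y = 0) (hD1 : ∀ ω x, |D ω x| ≤ 1)
    (T : Finset (Fin n)) :
    ∑ ω, bFourier (D ω) T ^ 2 ≤ Fintype.card Ω / 2 ^ n := by
  have hsum := sum_sq_sum_mul_eq_of_orthogonal D hD fun x => (-1 : ℝ) ^ #(T.filter fun i => x i)
  have hχ : ∀ x : Fin n → Bool, ((-1 : ℝ) ^ #(T.filter fun i => x i)) ^ 2 = 1 := fun x => by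
    rw [sq, ← mul_pow, neg_one_mul, neg_neg, one_pow]
  simp only [hχ, one_mul] at hsum
  have hle : ∑ x : Fin n → Bool, ∑ ω, D ω x ^ 2 ≤ 2 ^ n * Fintype.card Ω := by
    calc ∑ x : Fin n → Bool, ∑ ω, D ω x ^ 2 ≤ ∑ _x : Fin n → Bool, ∑ _ω : Ω, (1 : ℝ) :=
          sum_le_sum fun x _ => sum_le_sum fun ω _ => by
            simpa using pow_le_one₀ (abs_nonneg _) (hD1 ω x) (n := 2)
      _ = 2 ^ n * Fintype.card Ω := by simp
  simp only [bFourier, div_pow, ← sum_div, hsum]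
  rw [div_le_div_iff₀ (by positivity) (by positivity)]
  calc (∑ x : Fin n → Bool, ∑ ω, D ω x ^ 2) * 2 ^ n ≤ 2 ^ n * Fintype.card Ω * 2 ^ n := by
        gcongr
    _ = Fintype.card Ω * (2 ^ n) ^ 2 := by ring

lemma two_rpow_neg_binH_mul_le {ε : ℝ} (hε0 : 0 < ε) (hε : ε ≤ 1 / 2) {t m : ℕ}
    (ht : (t : ℝ) ≤ ε * m) :
    (2 : ℝ) ^ (-(binH ε * m)) ≤ ε ^ t * (1 - ε) ^ (m - t) := by
  have hε1 : 0 < 1 - ε := by linarith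
  have htm : t ≤ m := by
    have : ε * m ≤ m := by nlinarith [(m.cast_nonneg : (0 : ℝ) ≤ m)]
    exact_mod_cast ht.trans this
  have hlog : Real.logb 2 ε ≤ Real.logb 2 (1 - ε) :=
    Real.logb_le_logb_of_le one_lt_two hε0 (by linarith)
  have hterm : ε ^ t * (1 - ε) ^ (m - t) =
      (2 : ℝ) ^ (t * Real.logb 2 ε + ((m : ℝ) - t) * Real.logb 2 (1 - ε)) := by
    rw [Real.rpow_add two_pos, mul_comm (t : ℝ), mul_comm ((m : ℝ) - t), Real.rpow_mul zero_le_two,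
      Real.rpow_mul zero_le_two, Real.rpow_logb two_pos one_lt_two.ne' hε0,
      Real.rpow_logb two_pos one_lt_two.ne' hε1, Real.rpow_natCast, ← Nat.cast_sub htm,
      Real.rpow_natCast]
  rw [hterm]
  refine Real.rpow_le_rpow_of_exponent_le one_le_two ?_
  have : 0 ≤ (ε * m - t) * (Real.logb 2 (1 - ε) - Real.logb 2 ε) :=
    mul_nonneg (by linarith) (by linarith)
  unfold binH
  nlinarith

lemma card_filter_card_le_le_two_rpow_binH {ι : Type*} [Fintype ι] {ε : ℝ} (hε0 : 0 < ε)
    (hε : ε ≤ 1 / 2) :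
    (#{T : Finset ι | (#T : ℝ) ≤ ε * Fintype.card ι} : ℝ) ≤ 2 ^ (binH ε * Fintype.card ι) := by
  set m := Fintype.card ι
  have hbinom : ∑ T : Finset ι, ε ^ #T * (1 - ε) ^ (m - #T) = 1 := by
    rw [Fintype.sum_pow_mul_eq_add_pow, add_sub_cancel, one_pow]
  have hsum : (#{T : Finset ι | (#T : ℝ) ≤ ε * m} : ℝ) * (2 : ℝ) ^ (-(binH ε * m)) ≤ 1 := by
    calc (#{T : Finset ι | (#T : ℝ) ≤ ε * m} : ℝ) * (2 : ℝ) ^ (-(binH ε * m))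
        ≤ ∑ T ∈ {T : Finset ι | (#T : ℝ) ≤ ε * m}, ε ^ #T * (1 - ε) ^ (m - #T) := by
          rw [← nsmul_eq_mul]
          exact card_nsmul_le_sum _ _ _ fun T hT =>
            two_rpow_neg_binH_mul_le hε0 hε (mem_filter.mp hT).2
      _ ≤ ∑ T : Finset ι, ε ^ #T * (1 - ε) ^ (m - #T) :=
          sum_le_sum_of_subset_of_nonneg (filter_subset _ _) fun T _ _ => by
            have : 0 ≤ 1 - ε := by linarith
            positivity
      _ = 1 := hbinom
  rwa [Real.rpow_neg zero_le_two, mul_inv_le_iff₀ (by positivity), one_mul] at hsum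

lemma card_filter_lt_abs_mul_sq_le_s8 {Ω : Type*} [Fintype Ω] (Y : Ω → ℝ) {a : ℝ} (ha : 0 ≤ a) :
    (#{ω | a < |Y ω|} : ℝ) * a ^ 2 ≤ ∑ ω, Y ω ^ 2 := by
  rw [← nsmul_eq_mul]
  refine (card_nsmul_le_sum _ _ _ fun ω hω => ?_).trans
    (sum_le_sum_of_subset_of_nonneg (filter_subset _ _) fun ω _ _ => sq_nonneg (Y ω))
  rw [← sq_abs (Y ω)]
  exact pow_le_pow_left₀ ha (mem_filter.mp hω).2.le 2

theorem card_filter_forall_abs_bFourier_sub_le {Ω : Type*} [Fintype Ω] {n : ℕ}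
    (F : Ω → (Fin n → Bool) → ℝ) (q : ℝ)
    (hF : ∀ x y, x ≠ y → ∑ ω, (F ω x - q) * (F ω y - q) = 0) (hF1 : ∀ ω x, |F ω x - q| ≤ 1)
    {ε : ℝ} (hε0 : 0 < ε) (hε : ε ≤ 1 / 2) {a : ℝ} (ha : 0 < a) :
    (1 - 2 ^ (binH ε * n) / (2 ^ n * a ^ 2)) * Fintype.card Ω ≤
      #{ω | ∀ T : Finset (Fin n), (#T : ℝ) ≤ ε * n →
        |bFourier (F ω) T - if T = ∅ then q else 0| ≤ a} := by
  set small : Finset (Finset (Fin n)) := {T | (#T : ℝ) ≤ ε * n}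
  set bad : Finset (Fin n) → Finset Ω := fun T =>
    {ω | a < |bFourier (F ω) T - if T = ∅ then q else 0|}
  have hbad : ∀ T, (#(bad T) : ℝ) ≤ Fintype.card Ω / (2 ^ n * a ^ 2) := fun T => by
    rw [← div_div, le_div_iff₀ (by positivity)]
    simp only [bad, ← bFourier_sub_const]
    exact (card_filter_lt_abs_mul_sq_le_s8 _ ha.le).trans
      (sum_sq_bFourier_le (fun ω x => F ω x - q) hF hF1 T)
  have hsmall : (#small : ℝ) ≤ 2 ^ (binH ε * n) := by
    simpa [small] using card_filter_card_le_le_two_rpow_binH (ι := Fin n) hε0 hε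
  set good : Ω → Prop := fun ω => ∀ T : Finset (Fin n), (#T : ℝ) ≤ ε * n →
    |bFourier (F ω) T - if T = ∅ then q else 0| ≤ a
  have hunion : ({ω | ¬ good ω} : Finset Ω) ⊆ small.biUnion bad := fun ω hω => by
    simp only [good, mem_filter, mem_univ, true_and, not_forall, not_le] at hω
    obtain ⟨T, hT, hω⟩ := hω
    exact mem_biUnion.mpr ⟨T, by simpa [small] using hT, by simpa [bad] using hω⟩
  have hnotgood : (#{ω | ¬ good ω} : ℝ) ≤ 2 ^ (binH ε * n) * (Fintype.card Ω / (2 ^ n * a ^ 2)) :=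
    calc (#{ω | ¬ good ω} : ℝ) ≤ ∑ T ∈ small, (#(bad T) : ℝ) :=
          mod_cast (card_le_card hunion).trans card_biUnion_le
      _ ≤ #small * (Fintype.card Ω / (2 ^ n * a ^ 2)) := by
          simpa using sum_le_sum fun T (_ : T ∈ small) => hbad T
      _ ≤ _ := by gcongr
  have hcompl : (#{ω | good ω} : ℝ) + #{ω | ¬ good ω} = Fintype.card Ω :=
    mod_cast card_filter_add_card_filter_not (s := univ) good
  calc _ = (Fintype.card Ω : ℝ) - 2 ^ (binH ε * n) * (Fintype.card Ω / (2 ^ n * a ^ 2)) := by ring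
    _ ≤ _ := by linarith

lemma abs_ite_one_zero_sub_le_one {q : ℝ} (hq0 : 0 ≤ q) (hq1 : q ≤ 1) (p : Prop) [Decidable p] :
    |(if p then 1 else 0) - q| ≤ 1 := by
  split_ifs <;> rw [abs_sub_le_iff] <;> constructor <;> linarith

theorem stmt8_general {n : ℕ} (k : ℕ) (ε ζ : ℝ) (hε : ε ∈ Set.Ioo (0 : ℝ) (1 / 2)) (s : ℤ) :
    (1 - (k + 1) * (2 : ℝ) ^ (-(n : ℝ) + binH ε * n + 2 * ζ * n)) *
        (Fintype.card (Fin (k + 1) → Finset (Fin n))) ≤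
      ((Finset.univ.filter fun Ss : Fin (k + 1) → Finset (Fin n) =>
          ∀ T : Finset (Fin n), (T.card : ℝ) ≤ ε * n →
            |bFourier (fun x : Fin n → Bool =>
                  if (∑ i : Fin (k + 1), 2 ^ (i : ℕ) *
                        ∑ j ∈ Ss i, (if x j then (1 : ℤ) else 0)) ≡ s [ZMOD (2 ^ (k + 1))]
                  then 1 else 0) T
                - (if T = ∅ then (2 : ℝ) ^ (-((k : ℝ) + 1)) else 0)|
              ≤ (2 : ℝ) ^ (-ζ * n)).card : ℝ) := by
  have hq : (2 : ℝ) ^ (-((k : ℝ) + 1)) = ((2 : ℝ) ^ (k + 1))⁻¹ := by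
    rw [Real.rpow_neg zero_le_two, ← Real.rpow_natCast]
    push_cast
    rfl
  have hmod : ∀ (Ss : Fin (k + 1) → Finset (Fin n)) (x : Fin n → Bool),
      (∑ i : Fin (k + 1), 2 ^ (i : ℕ) * ∑ j ∈ Ss i, (if x j then (1 : ℤ) else 0)) ≡
          s [ZMOD (2 ^ (k + 1))] ↔
        sumOn {j | x j} (binaryColumn (k + 1) Ss) = (s : ZMod (2 ^ (k + 1))) := fun Ss x => by
    rw [← intCast_sum_two_pow_mul_eq_sumOn_binaryColumn, ZMod.intCast_eq_intCast_iff, Nat.cast_pow,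
      Nat.cast_ofNat]
  have hexp : (2 : ℝ) ^ (binH ε * n) / (2 ^ n * ((2 : ℝ) ^ (-ζ * n)) ^ 2) =
      (2 : ℝ) ^ (-(n : ℝ) + binH ε * n + 2 * ζ * n) := by
    rw [← Real.rpow_natCast, ← Real.rpow_mul_natCast zero_le_two, ← Real.rpow_add two_pos,
      ← Real.rpow_sub two_pos]
    ring_nf
  have hpos : 0 ≤ (2 : ℝ) ^ (-(n : ℝ) + binH ε * n + 2 * ζ * n) := by positivity
  simp only [hq, hmod]
  calc _ ≤ (1 - (2 : ℝ) ^ (-(n : ℝ) + binH ε * n + 2 * ζ * n)) *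
        (Fintype.card (Fin (k + 1) → Finset (Fin n))) := by
        gcongr
        nlinarith [(k.cast_nonneg : (0 : ℝ) ≤ k)]
    _ ≤ _ := hexp ▸ card_filter_forall_abs_bFourier_sub_le _ _
        (fun x y hxy => sum_indicator_binaryColumn_sub_mul_eq_zero (k + 1) hxy _)
        (fun _ _ => abs_ite_one_zero_sub_le_one (by positivity)
          (inv_le_one_of_one_le₀ (one_le_pow₀ one_le_two)) _)
        hε.1 hε.2.le (by positivity)

theorem stmt8 {n : ℕ} (k : ℕ) (ε ζ : ℝ) (hε : ε ∈ Set.Ioo (0 : ℝ) (1 / 2))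
    (hζ : ζ ∈ Set.Ioo (0 : ℝ) (1 / 2)) (s : ℤ) :
    (1 - (k + 1) * (2 : ℝ) ^ (-(n : ℝ) + binH ε * n + 2 * ζ * n)) *
        (Fintype.card (Fin (k + 1) → Finset (Fin n))) ≤
      ((Finset.univ.filter fun Ss : Fin (k + 1) → Finset (Fin n) =>
          ∀ T : Finset (Fin n), (T.card : ℝ) ≤ ε * n →
            |bFourier (fun x : Fin n → Bool =>
                  if (∑ i : Fin (k + 1), 2 ^ (i : ℕ) *
                        ∑ j ∈ Ss i, (if x j then (1 : ℤ) else 0)) ≡ s [ZMOD (2 ^ (k + 1))]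
                  then 1 else 0) T
                - (if T = ∅ then (2 : ℝ) ^ (-((k : ℝ) + 1)) else 0)|
              ≤ (2 : ℝ) ^ (-ζ * n)).card : ℝ) :=
  stmt8_general k ε ζ hε s
end

section
/- Fix an integer k ≥ 0 and reals ε, ζ ∈ (0, 1/2). Choose integers w₁, …, w_n uniformly and independently from {0, 1, …, 2^{k+1} - 1}. For s ∈ ℤ define f_s : {0,1}^n → {0,1} by f_s(x) = 1 iff Σ w_i x_i ≡ s (mod 2^{k+1}). Then with probability at least 1 - (k+1)·2^{-n + H(ε)n + 2ζn + k + 1} over the choice of weights, simultaneously for all s ∈ ℤ and all T with |T| ≤ εn: |f̂_s(T) - 2^{-(k+1)}·δ_{T,∅}| ≤ 2^{-ζn}. -/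
open scoped Classical

/-!
Let `M = 2^(k+1)` and let `ω` be a primitive `M`-th root of unity. Expanding the indicator of
`∑ wᵢ xᵢ ≡ s (mod M)` as `M⁻¹ ∑_{j<M} ω^{j (∑ wᵢ xᵢ - s)}` gives
`f̂_s(T) = (M 2ⁿ)⁻¹ ∑_{j<M} ω^{-js} ∏ᵢ (1 ± ω^{j wᵢ})`, with the minus sign exactly for `i ∈ T`.
The term `j = 0` is `δ_{T,∅} / M`. For `0 < j < M` the product has mean square `(2M)ⁿ` over
uniform `w`, because `∑_v ω^{jv} = 0`; by Markov's inequality it exceeds `2^{(1-ζ)n}` for at most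
`(2M)ⁿ 2^{-2(1-ζ)n}` weight vectors. A union bound over the `M - 1` values of `j` and the at most
`2^{H(ε)n}` sets `T` with `|T| ≤ εn` finishes; the latter count holds because each such `T` has
mass `ε^|T| (1-ε)^(n-|T|) ≥ 2^{-H(ε)n}` in the `ε`-biased product measure.
-/

open Finset

section Entropy

variable {ε : ℝ}

lemma two_rpow_neg_binH_mul (h0 : 0 < ε) (h1 : ε < 1) (m : ℝ) :
    (2 : ℝ) ^ (-(binH ε * m)) = ε ^ (ε * m) * (1 - ε) ^ ((1 - ε) * m) := by
  have hlog : ∀ p : ℝ, 0 < p → ∀ c : ℝ, p ^ c = 2 ^ (Real.logb 2 p * c) := fun p hp c => by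
    rw [Real.rpow_mul zero_le_two, Real.rpow_logb two_pos (by norm_num) hp]
  rw [hlog ε h0, hlog (1 - ε) (by linarith), ← Real.rpow_add two_pos, binH]
  ring_nf

lemma two_rpow_neg_binH_mul_le_pow_mul_pow (h0 : 0 < ε) (hε : ε ≤ 1 / 2) {m a : ℕ} (ham : a ≤ m)
    (ha : (a : ℝ) ≤ ε * m) : (2 : ℝ) ^ (-(binH ε * m)) ≤ ε ^ a * (1 - ε) ^ (m - a) := by
  have h1 : 0 < 1 - ε := by linarith
  have hgeom : ∀ c : ℝ,
      ε ^ c * (1 - ε) ^ ((m : ℝ) - c) = (1 - ε) ^ (m : ℝ) * (ε / (1 - ε)) ^ c := by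
    intro c
    rw [Real.rpow_sub h1, Real.div_rpow h0.le h1.le]
    field_simp
  calc (2 : ℝ) ^ (-(binH ε * m)) = ε ^ (ε * m) * (1 - ε) ^ ((m : ℝ) - ε * m) := by
        rw [two_rpow_neg_binH_mul h0 (by linarith), sub_mul, one_mul]
    _ ≤ ε ^ (a : ℝ) * (1 - ε) ^ ((m : ℝ) - a) := by
        rw [hgeom, hgeom]
        refine mul_le_mul_of_nonneg_left ?_ (by positivity)
        exact Real.rpow_le_rpow_of_exponent_ge (by positivity)
          ((div_le_one h1).mpr (by linarith)) ha
    _ = ε ^ a * (1 - ε) ^ (m - a) := by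
        rw [← Nat.cast_sub ham, Real.rpow_natCast, Real.rpow_natCast]

theorem card_finset_card_le_mul_le_two_rpow_binH {α : Type*} [Fintype α] (h0 : 0 < ε)
    (hε : ε ≤ 1 / 2) :
    (#{T : Finset α | (#T : ℝ) ≤ ε * Fintype.card α} : ℝ) ≤ 2 ^ (binH ε * Fintype.card α) := by
  set m := Fintype.card α
  have h1 : 0 < 1 - ε := by linarith
  have hle : (#{T : Finset α | (#T : ℝ) ≤ ε * m} : ℝ) * 2 ^ (-(binH ε * m)) ≤ 1 :=
    calc _ ≤ ∑ T ∈ {T : Finset α | (#T : ℝ) ≤ ε * m}, ε ^ #T * (1 - ε) ^ (m - #T) := by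
          rw [← nsmul_eq_mul]
          exact card_nsmul_le_sum _ _ _ fun T hT =>
            two_rpow_neg_binH_mul_le_pow_mul_pow h0 hε (card_le_univ T) (mem_filter.mp hT).2
      _ ≤ ∑ T : Finset α, ε ^ #T * (1 - ε) ^ (m - #T) :=
          sum_le_sum_of_subset_of_nonneg (filter_subset _ _) fun _ _ _ => by positivity
      _ = 1 := by rw [Fintype.sum_pow_mul_eq_add_pow, add_sub_cancel, one_pow]
  rwa [Real.rpow_neg zero_le_two, ← div_eq_mul_inv, div_le_one (by positivity)] at hle

end Entropy

lemma IsPrimitiveRoot.sum_range_zpow_pow {K : Type*} [Field K] {ω : K} {M : ℕ}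
    (hω : IsPrimitiveRoot ω M) (a : ℤ) :
    ∑ j ∈ range M, (ω ^ a) ^ j = if (M : ℤ) ∣ a then (M : K) else 0 := by
  split_ifs with h
  · simp [(hω.zpow_eq_one_iff_dvd a).mpr h]
  · have hne : ω ^ a ≠ 1 := fun h1 => h ((hω.zpow_eq_one_iff_dvd a).mp h1)
    have hpow : (ω ^ a) ^ M = 1 := by
      rw [← zpow_natCast, ← zpow_mul, mul_comm, zpow_mul, zpow_natCast, hω.pow_eq_one, one_zpow]
    rw [geom_sum_eq hne, hpow, sub_self, zero_div]

lemma IsPrimitiveRoot.sum_fin_pow_mul_eq_zero {K : Type*} [Field K] {ω : K} {M j : ℕ}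
    (hω : IsPrimitiveRoot ω M) (hj : ¬ M ∣ j) : ∑ v : Fin M, ω ^ (j * (v : ℕ)) = 0 := by
  have h := hω.sum_range_zpow_pow j
  rw [if_neg (by exact_mod_cast hj), zpow_natCast] at h
  rw [Fin.sum_univ_eq_sum_range (fun v => ω ^ (j * v)) M]
  simpa [pow_mul] using h

noncomputable def weightIndicator {n M : ℕ} (w : Fin n → Fin M) (s : ℤ) (x : Fin n → Bool) : ℝ :=
  if (∑ i, (w i : ℤ) * (if x i then 1 else 0)) ≡ s [ZMOD M] then 1 else 0

noncomputable def weightProd {ι : Type*} [Fintype ι] [DecidableEq ι] {M : ℕ} (ω : ℂ)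
    (w : ι → Fin M) (T : Finset ι) (j : ℕ) : ℂ :=
  ∏ i, (1 + (if i ∈ T then -1 else 1) * ω ^ (j * (w i : ℕ)))

lemma sum_neg_one_pow_card_filter_mul_prod {R ι : Type*} [CommRing R] [Fintype ι] [DecidableEq ι]
    (T : Finset ι) (z : ι → R) :
    ∑ x : ι → Bool, (-1 : R) ^ #(T.filter fun i => x i) * ∏ i, (if x i then z i else 1) =
      ∏ i, (1 + (if i ∈ T then -1 else 1) * z i) := by
  have hsign : ∀ x : ι → Bool,
      (-1 : R) ^ #(T.filter fun i => x i) = ∏ i, if i ∈ T ∧ x i then -1 else 1 := by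
    intro x
    rw [prod_ite, prod_const, prod_const_one, mul_one]
    congr 2
    ext i
    simp
  simp_rw [hsign, ← prod_mul_distrib]
  rw [← Fintype.prod_sum fun i (b : Bool) => (if i ∈ T ∧ b then -1 else 1) * if b then z i else 1]
  refine prod_congr rfl fun i _ => ?_
  rw [Fintype.sum_bool]
  by_cases hi : i ∈ T <;> simp [hi, add_comm]

lemma IsPrimitiveRoot.ofReal_weightIndicator_eq_sum {ω : ℂ} {n M : ℕ}
    (hω : IsPrimitiveRoot ω M) (hM : M ≠ 0) (w : Fin n → Fin M) (s : ℤ) (x : Fin n → Bool) :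
    (weightIndicator w s x : ℂ) =
      (∑ j ∈ range M, ω ^ (-(s * j)) * ∏ i, (if x i then ω ^ (j * (w i : ℕ)) else 1)) / M := by
  set N : ℕ := ∑ i, (w i : ℕ) * (if x i then 1 else 0)
  have hN : ∑ i, (w i : ℤ) * (if x i then 1 else 0) = N := by
    push_cast [N]
    refine sum_congr rfl fun i _ => ?_
    split_ifs <;> simp
  have hterm : ∀ j : ℕ, ω ^ (-(s * j)) * ∏ i, (if x i then ω ^ (j * (w i : ℕ)) else 1) =
      (ω ^ ((N : ℤ) - s)) ^ j := by
    intro j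
    have hprod : ∏ i, (if x i then ω ^ (j * (w i : ℕ)) else 1) = ω ^ (j * N) := by
      rw [mul_sum, ← prod_pow_eq_pow_sum]
      refine prod_congr rfl fun i _ => ?_
      split_ifs <;> simp
    rw [hprod, ← zpow_natCast, ← zpow_natCast, ← zpow_mul, ← zpow_add₀ (hω.ne_zero hM)]
    push_cast
    ring_nf
  simp_rw [hterm, hω.sum_range_zpow_pow, weightIndicator, hN, Int.modEq_iff_dvd, dvd_sub_comm]
  split_ifs <;> simp [hM]

theorem IsPrimitiveRoot.ofReal_bFourier_weightIndicator {ω : ℂ} {n M : ℕ}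
    (hω : IsPrimitiveRoot ω M) (hM : M ≠ 0) (w : Fin n → Fin M) (s : ℤ) (T : Finset (Fin n)) :
    (bFourier (weightIndicator w s) T : ℂ) =
      (∑ j ∈ range M, ω ^ (-(s * j)) * weightProd ω w T j) / (M * 2 ^ n) := by
  simp_rw [weightProd, ← sum_neg_one_pow_card_filter_mul_prod, mul_sum, sum_div]
  rw [sum_comm, bFourier]
  push_cast
  rw [sum_div]
  refine sum_congr rfl fun x _ => ?_
  rw [hω.ofReal_weightIndicator_eq_sum hM, sum_div, sum_mul, sum_div]
  refine sum_congr rfl fun j _ => ?_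
  field_simp

lemma weightProd_zero {ι : Type*} [Fintype ι] [DecidableEq ι] {M : ℕ} (ω : ℂ) (w : ι → Fin M)
    (T : Finset ι) : weightProd ω w T 0 = if T = ∅ then 2 ^ Fintype.card ι else 0 := by
  simp only [weightProd, zero_mul, pow_zero, mul_one]
  split_ifs with hT
  · simp [hT, one_add_one_eq_two]
  · obtain ⟨i, hi⟩ := nonempty_iff_ne_empty.mpr hT
    exact prod_eq_zero (mem_univ i) (by simp [hi])

theorem IsPrimitiveRoot.abs_bFourier_weightIndicator_sub_le {ω : ℂ} {n M : ℕ}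
    (hω : IsPrimitiveRoot ω M) (hM : M ≠ 0) (w : Fin n → Fin M) (s : ℤ) (T : Finset (Fin n))
    {b : ℝ} (hb : 0 ≤ b) (hP : ∀ j ∈ Ico 1 M, ‖weightProd ω w T j‖ ≤ 2 ^ n * b) :
    |bFourier (weightIndicator w s) T - if T = ∅ then (M : ℝ)⁻¹ else 0| ≤ b := by
  have hdiff : ((bFourier (weightIndicator w s) T - if T = ∅ then (M : ℝ)⁻¹ else 0 : ℝ) : ℂ) =
      (∑ j ∈ Ico 1 M, ω ^ (-(s * j)) * weightProd ω w T j) / (M * 2 ^ n) := by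
    rw [Complex.ofReal_sub, hω.ofReal_bFourier_weightIndicator hM, range_eq_Ico,
      sum_eq_sum_Ico_succ_bot (Nat.pos_of_ne_zero hM), weightProd_zero, Fintype.card_fin, add_div]
    split_ifs <;> field_simp <;> simp [hM]
  have hsum : ‖∑ j ∈ Ico 1 M, ω ^ (-(s * j)) * weightProd ω w T j‖ ≤ (M - 1) * (2 ^ n * b) :=
    calc _ ≤ ∑ j ∈ Ico 1 M, ‖ω ^ (-(s * j)) * weightProd ω w T j‖ := norm_sum_le _ _
      _ ≤ ∑ _j ∈ Ico 1 M, 2 ^ n * b := sum_le_sum fun j hj => by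
          rw [norm_mul, norm_zpow, hω.norm'_eq_one hM, one_zpow, one_mul]
          exact hP j hj
      _ = (M - 1) * (2 ^ n * b) := by
          rw [sum_const, Nat.card_Ico, nsmul_eq_mul, Nat.cast_sub (Nat.one_le_iff_ne_zero.mpr hM),
            Nat.cast_one]
  have hM1 : (1 : ℝ) ≤ M := Nat.one_le_cast.mpr (Nat.one_le_iff_ne_zero.mpr hM)
  have hnorm : ‖(M : ℂ) * 2 ^ n‖ = M * 2 ^ n := by simp
  rw [← Real.norm_eq_abs, ← Complex.norm_real, hdiff, norm_div, hnorm,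
    div_le_iff₀ (mul_pos (by linarith) (by positivity))]
  nlinarith [pow_pos (two_pos : (0 : ℝ) < 2) n]

lemma IsPrimitiveRoot.sum_normSq_one_add_mul_pow {ω : ℂ} {M j : ℕ} (hω : IsPrimitiveRoot ω M)
    (hM : M ≠ 0) (hj : ¬ M ∣ j) {c : ℂ} (hc : c = 1 ∨ c = -1) :
    ∑ v : Fin M, Complex.normSq (1 + c * ω ^ (j * (v : ℕ))) = 2 * M := by
  have hc1 : Complex.normSq c = 1 := by rcases hc with rfl | rfl <;> simp
  have hterm : ∀ v : Fin M, Complex.normSq (1 + c * ω ^ (j * (v : ℕ))) =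
      2 + 2 * (c * ω ^ (j * (v : ℕ))).re := by
    intro v
    rw [Complex.normSq_add, map_mul, hc1, Complex.normSq_eq_norm_sq (ω ^ _), norm_pow,
      hω.norm'_eq_one hM, one_pow, one_pow, one_mul, Complex.normSq_one, one_mul, Complex.conj_re]
    ring
  rw [sum_congr rfl fun v _ => hterm v, sum_add_distrib, ← mul_sum, ← Complex.re_sum, ← mul_sum,
    hω.sum_fin_pow_mul_eq_zero hj]
  simp [mul_comm]

theorem IsPrimitiveRoot.sum_normSq_weightProd {ι : Type*} [Fintype ι] [DecidableEq ι] {ω : ℂ}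
    {M j : ℕ} (hω : IsPrimitiveRoot ω M) (hM : M ≠ 0) (hj : ¬ M ∣ j) (T : Finset ι) :
    ∑ w : ι → Fin M, Complex.normSq (weightProd ω w T j) = (2 * M) ^ Fintype.card ι := by
  simp_rw [weightProd, map_prod]
  rw [← Fintype.prod_sum fun i (v : Fin M) =>
      Complex.normSq (1 + (if i ∈ T then -1 else 1) * ω ^ (j * (v : ℕ))),
    prod_congr rfl fun i _ => hω.sum_normSq_one_add_mul_pow hM hj (by split_ifs <;> simp),
    prod_const, card_univ]

lemma card_filter_lt_mul_le_sum {α : Type*} (s : Finset α) {f : α → ℝ} (hf : ∀ a ∈ s, 0 ≤ f a)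
    (t : ℝ) : #{a ∈ s | t < f a} * t ≤ ∑ a ∈ s, f a :=
  calc #{a ∈ s | t < f a} * t ≤ ∑ a ∈ s with t < f a, f a := by
        rw [← nsmul_eq_mul]
        exact card_nsmul_le_sum _ _ _ fun a ha => (mem_filter.mp ha).2.le
    _ ≤ ∑ a ∈ s, f a := sum_le_sum_of_subset_of_nonneg (filter_subset _ _) fun a ha _ => hf a ha

theorem IsPrimitiveRoot.card_lt_norm_weightProd_le {ι : Type*} [Fintype ι] [DecidableEq ι]
    {ω : ℂ} {M j : ℕ} (hω : IsPrimitiveRoot ω M) (hM : M ≠ 0) (hj : ¬ M ∣ j) (T : Finset ι)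
    {t : ℝ} (ht : 0 < t) :
    (#{w : ι → Fin M | t < ‖weightProd ω w T j‖} : ℝ) ≤ (2 * M) ^ Fintype.card ι / t ^ 2 := by
  have hiff : ∀ w : ι → Fin M,
      t < ‖weightProd ω w T j‖ ↔ t ^ 2 < Complex.normSq (weightProd ω w T j) := fun w => by
    rw [← Complex.sq_norm, pow_lt_pow_iff_left₀ ht.le (norm_nonneg _) two_ne_zero]
  rw [filter_congr fun w _ => hiff w, le_div_iff₀ (by positivity),
    ← hω.sum_normSq_weightProd hM hj T]
  exact card_filter_lt_mul_le_sum _ (fun w _ => Complex.normSq_nonneg _) _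

theorem IsPrimitiveRoot.card_biUnion_lt_norm_weightProd_le {ι : Type*} [Fintype ι]
    [DecidableEq ι] {ω : ℂ} {M : ℕ} (hω : IsPrimitiveRoot ω M) (hM : M ≠ 0)
    (S : Finset (Finset ι)) {t : ℝ} (ht : 0 < t) :
    (#((Ico 1 M ×ˢ S).biUnion fun p => {w : ι → Fin M | t < ‖weightProd ω w p.2 p.1‖}) : ℝ) ≤
      (M - 1) * #S * ((2 * M) ^ Fintype.card ι / t ^ 2) :=
  calc _ ≤ ∑ p ∈ Ico 1 M ×ˢ S, (#{w : ι → Fin M | t < ‖weightProd ω w p.2 p.1‖} : ℝ) := by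
        exact_mod_cast card_biUnion_le
    _ ≤ ∑ p ∈ Ico 1 M ×ˢ S, (2 * M : ℝ) ^ Fintype.card ι / t ^ 2 := sum_le_sum fun p hp => by
        obtain ⟨hj1, hjM⟩ := mem_Ico.mp (mem_product.mp hp).1
        exact hω.card_lt_norm_weightProd_le hM (Nat.not_dvd_of_pos_of_lt hj1 hjM) p.2 ht
    _ = (M - 1) * #S * ((2 * M) ^ Fintype.card ι / t ^ 2) := by
        rw [sum_const, card_product, Nat.card_Ico, nsmul_eq_mul, Nat.cast_mul,
          Nat.cast_sub (Nat.one_le_iff_ne_zero.mpr hM), Nat.cast_one]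

theorem sub_le_card_filter_abs_bFourier_weightIndicator_sub_le {n M : ℕ} (hM : M ≠ 0) {ε : ℝ}
    (hε0 : 0 < ε) (hε : ε ≤ 1 / 2) {b : ℝ} (hb : 0 < b) :
    (M : ℝ) ^ n - (M - 1) * 2 ^ (binH ε * n) * ((2 * M) ^ n / (2 ^ n * b) ^ 2) ≤
      #{w : Fin n → Fin M | ∀ s : ℤ, ∀ T : Finset (Fin n), (#T : ℝ) ≤ ε * n →
        |bFourier (weightIndicator w s) T - if T = ∅ then (M : ℝ)⁻¹ else 0| ≤ b} := by
  obtain ⟨ω, hω⟩ : ∃ ω : ℂ, IsPrimitiveRoot ω M := ⟨_, Complex.isPrimitiveRoot_exp M hM⟩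
  set S : Finset (Finset (Fin n)) := {T | (#T : ℝ) ≤ ε * n}
  set bad := (Ico 1 M ×ˢ S).biUnion fun p =>
    {w : Fin n → Fin M | 2 ^ n * b < ‖weightProd ω w p.2 p.1‖}
  have hgood : badᶜ ⊆ ({w : Fin n → Fin M | ∀ s : ℤ, ∀ T : Finset (Fin n), (#T : ℝ) ≤ ε * n →
      |bFourier (weightIndicator w s) T - if T = ∅ then (M : ℝ)⁻¹ else 0| ≤ b} : Finset _) := by
    intro w hw
    simp only [bad, S, mem_compl, mem_biUnion, mem_product, mem_filter, mem_univ, true_and,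
      not_exists, not_and, not_lt, Prod.forall] at hw
    simp only [mem_filter, mem_univ, true_and]
    exact fun s T hT => hω.abs_bFourier_weightIndicator_sub_le hM w s T hb.le
      fun j hj => hw j T ⟨hj, hT⟩
  have hbad : (#bad : ℝ) ≤ (M - 1) * 2 ^ (binH ε * n) * ((2 * M) ^ n / (2 ^ n * b) ^ 2) := by
    have hM1 : (1 : ℝ) ≤ M := Nat.one_le_cast.mpr (Nat.one_le_iff_ne_zero.mpr hM)
    have hS := card_finset_card_le_mul_le_two_rpow_binH (α := Fin n) hε0 hε
    rw [Fintype.card_fin] at hS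
    have h := hω.card_biUnion_lt_norm_weightProd_le hM S (by positivity : (0 : ℝ) < 2 ^ n * b)
    rw [Fintype.card_fin] at h
    exact h.trans (by gcongr)
  calc (M : ℝ) ^ n - (M - 1) * 2 ^ (binH ε * n) * ((2 * M) ^ n / (2 ^ n * b) ^ 2)
      ≤ Fintype.card (Fin n → Fin M) - #bad := by
        rw [Fintype.card_fun, Fintype.card_fin, Fintype.card_fin]
        push_cast
        linarith
    _ = #badᶜ := by rw [card_compl, Nat.cast_sub (card_le_univ _)]
    _ ≤ _ := by exact_mod_cast card_le_card hgood

lemma two_pow_succ_sub_one_mul_le_rpow {n : ℕ} (k : ℕ) (h ζ : ℝ) :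
    ((2 : ℝ) ^ (k + 1) - 1) * 2 ^ (h * n) * ((2 * 2 ^ (k + 1)) ^ n / (2 ^ n * 2 ^ (-ζ * n)) ^ 2) ≤
      (k + 1) * 2 ^ (-(n : ℝ) + h * n + 2 * ζ * n + k + 1) * ((2 : ℝ) ^ (k + 1)) ^ n := by
  set X : ℝ := 2 ^ (k + 1)
  set Z : ℝ := 2 ^ (ζ * n)
  have hE : (2 : ℝ) ^ (-(n : ℝ) + h * n + 2 * ζ * n + k + 1) =
      2 ^ (h * n) * (Z * Z) * X / 2 ^ n := by
    rw [show -(n : ℝ) + h * n + 2 * ζ * n + k + 1 = h * n + ζ * n + ζ * n + (k + 1 : ℕ) - n by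
        push_cast; ring,
      Real.rpow_sub two_pos, Real.rpow_add two_pos, Real.rpow_add two_pos, Real.rpow_add two_pos,
      Real.rpow_natCast, Real.rpow_natCast, mul_assoc (2 ^ (h * n))]
  have hZ : (2 : ℝ) ^ (-ζ * n) = Z⁻¹ := by rw [neg_mul, Real.rpow_neg zero_le_two]
  have hX : X - 1 ≤ (k + 1) * X := by
    nlinarith [one_le_pow₀ (n := k + 1) (one_le_two : (1 : ℝ) ≤ 2)]
  rw [hE, hZ]
  calc _ = (X - 1) * (2 ^ (h * n) * (Z * Z) / 2 ^ n * X ^ n) := by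
        field_simp
        rw [mul_pow]
        ring
    _ ≤ (k + 1) * X * (2 ^ (h * n) * (Z * Z) / 2 ^ n * X ^ n) := by gcongr
    _ = _ := by ring

theorem stmt9_general {n : ℕ} (k : ℕ) (ε ζ : ℝ) (hε : ε ∈ Set.Ioo (0 : ℝ) (1 / 2)) :
    (1 - (k + 1) * (2 : ℝ) ^ (-(n : ℝ) + binH ε * n + 2 * ζ * n + k + 1)) *
        (Fintype.card (Fin n → Fin (2 ^ (k + 1)))) ≤
      ((Finset.univ.filter fun w : Fin n → Fin (2 ^ (k + 1)) =>
          ∀ s : ℤ, ∀ T : Finset (Fin n), (T.card : ℝ) ≤ ε * n →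
            |bFourier (fun x : Fin n → Bool =>
                  if (∑ i : Fin n, (w i : ℤ) * (if x i then 1 else 0)) ≡ s [ZMOD (2 ^ (k + 1))]
                  then 1 else 0) T
                - (if T = ∅ then (2 : ℝ) ^ (-((k : ℝ) + 1)) else 0)|
              ≤ (2 : ℝ) ^ (-ζ * n)).card : ℝ) := by
  have hcount := sub_le_card_filter_abs_bFourier_weightIndicator_sub_le (n := n)
    (M := 2 ^ (k + 1)) (by positivity) hε.1 hε.2.le (b := 2 ^ (-ζ * n)) (by positivity)
  have hMinv : ((2 ^ (k + 1) : ℕ) : ℝ)⁻¹ = 2 ^ (-((k : ℝ) + 1)) := by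
    rw [Real.rpow_neg zero_le_two, ← Nat.cast_succ, Real.rpow_natCast, Nat.cast_pow, Nat.cast_ofNat]
  refine le_trans ?_ (hcount.trans_eq ?_)
  · rw [Fintype.card_fun, Fintype.card_fin, Fintype.card_fin]
    push_cast
    nlinarith [two_pow_succ_sub_one_mul_le_rpow (n := n) k (binH ε) ζ]
  · congr 2
    refine filter_congr fun w _ => ?_
    rw [hMinv]
    unfold weightIndicator
    simp only [Nat.cast_pow, Nat.cast_ofNat]

theorem stmt9 {n : ℕ} (k : ℕ) (ε ζ : ℝ) (hε : ε ∈ Set.Ioo (0 : ℝ) (1 / 2))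
    (hζ : ζ ∈ Set.Ioo (0 : ℝ) (1 / 2)) :
    (1 - (k + 1) * (2 : ℝ) ^ (-(n : ℝ) + binH ε * n + 2 * ζ * n + k + 1)) *
        (Fintype.card (Fin n → Fin (2 ^ (k + 1)))) ≤
      ((Finset.univ.filter fun w : Fin n → Fin (2 ^ (k + 1)) =>
          ∀ s : ℤ, ∀ T : Finset (Fin n), (T.card : ℝ) ≤ ε * n →
            |bFourier (fun x : Fin n → Bool =>
                  if (∑ i : Fin n, (w i : ℤ) * (if x i then 1 else 0)) ≡ s [ZMOD (2 ^ (k + 1))]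
                  then 1 else 0) T
                - (if T = ∅ then (2 : ℝ) ^ (-((k : ℝ) + 1)) else 0)|
              ≤ (2 : ℝ) ^ (-ζ * n)).card : ℝ) :=
  stmt9_general k ε ζ hε
end

section
/- Let f, χ₁, …, χ_k : X → {-1,1} be functions on a finite set X. Suppose Σ_{i=1}^{k} |⟨f, χ_i⟩| < 1/2 and for each i, Σ_{j≠i} |⟨χ_i, χ_j⟩| ≤ 1/2, where ⟨u,v⟩ = |X|^{-1} Σ_{x∈X} u(x)v(x). Then there exists a probability distribution μ on X such that E_{x∼μ}[f(x)χ_i(x)] = 0 for every i = 1, …, k. -/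
/-!
Write `corr u v` for `⟨u, v⟩`, let `G` be the Gram matrix `corr (χ i) (χ j)` and
`b i = corr f (χ i)`. The hypothesis on the off-diagonal entries says that `G - 1` has ℓ¹
operator norm at most `1/2`, so `G t = -b` has a solution with `‖t‖₁ ≤ 2‖b‖₁ < 1`. The weight
`1 + ∑ j, t j * f * χ j` is then positive, and since `f² = 1` its correlation with `f * χ i`
equals `b i + (G t) i = 0`; normalizing it gives `μ`.
-/

open Finset

namespace Matrix

variable {ι : Type*} [Fintype ι]

theorem sum_abs_mulVec_le (B : Matrix ι ι ℝ) {ε : ℝ} (hcol : ∀ j, ∑ i, |B i j| ≤ ε)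
    (t : ι → ℝ) : ∑ i, |(B *ᵥ t) i| ≤ ε * ∑ i, |t i| :=
  calc ∑ i, |(B *ᵥ t) i| ≤ ∑ i, ∑ j, |B i j| * |t j| :=
        sum_le_sum fun i _ => (abs_sum_le_sum_abs _ _).trans_eq (by simp only [abs_mul])
    _ = ∑ j, (∑ i, |B i j|) * |t j| := by rw [sum_comm]; simp only [sum_mul]
    _ ≤ ∑ j, ε * |t j| := by gcongr with j; exact hcol j
    _ = ε * ∑ i, |t i| := (mul_sum _ _ _).symm

variable [DecidableEq ι]

theorem one_sub_mul_sum_abs_le_sum_abs_mulVec (A : Matrix ι ι ℝ) {ε : ℝ}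
    (hdiag : ∀ i, A i i = 1) (hcol : ∀ j, ∑ i ∈ univ.erase j, |A i j| ≤ ε) (t : ι → ℝ) :
    (1 - ε) * ∑ i, |t i| ≤ ∑ i, |(A *ᵥ t) i| := by
  have hoff : ∀ j, ∑ i, |(A - 1) i j| ≤ ε := fun j => by
    rw [← sum_erase (a := j) _ (by simp [hdiag])]
    refine le_of_eq_of_le (sum_congr rfl fun i hi => ?_) (hcol j)
    simp [one_apply_ne (ne_of_mem_erase hi)]
  have hpoint : ∀ i, |t i| ≤ |(A *ᵥ t) i| + |((A - 1) *ᵥ t) i| := fun i => by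
    have hti : t i = (A *ᵥ t) i - ((A - 1) *ᵥ t) i := by simp [sub_mulVec]
    rw [hti]
    exact abs_sub _ _
  have hsum := sum_le_sum fun i (_ : i ∈ univ) => hpoint i
  rw [sum_add_distrib] at hsum
  linarith [sum_abs_mulVec_le (A - 1) hoff t]

theorem exists_mulVec_eq_and_one_sub_mul_sum_abs_le (A : Matrix ι ι ℝ) {ε : ℝ}
    (hdiag : ∀ i, A i i = 1) (hcol : ∀ j, ∑ i ∈ univ.erase j, |A i j| ≤ ε) (hε : ε < 1)
    (v : ι → ℝ) : ∃ t, A *ᵥ t = v ∧ (1 - ε) * ∑ i, |t i| ≤ ∑ i, |v i| := by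
  have hinj : Function.Injective A.mulVec := by
    refine (injective_iff_map_eq_zero A.mulVecLin).mpr fun t ht => ?_
    have hbound := one_sub_mul_sum_abs_le_sum_abs_mulVec A hdiag hcol t
    simp only [mulVecLin_apply] at ht
    simp only [ht, Pi.zero_apply, abs_zero, sum_const_zero] at hbound
    have hsum : ∑ i, |t i| = 0 :=
      le_antisymm (nonpos_of_mul_nonpos_right hbound (by linarith)) (by positivity)
    ext i
    simpa using (sum_eq_zero_iff_of_nonneg fun i _ => abs_nonneg (t i)).mp hsum i (mem_univ i)
  obtain ⟨t, rfl⟩ := mulVec_surjective_iff_isUnit.mpr (mulVec_injective_iff_isUnit.mp hinj) v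
  exact ⟨t, rfl, one_sub_mul_sum_abs_le_sum_abs_mulVec A hdiag hcol t⟩

end Matrix

theorem one_add_sum_mul_pos {ι : Type*} [Fintype ι] {t g : ι → ℝ} (hg : ∀ j, |g j| ≤ 1)
    (ht : ∑ j, |t j| < 1) : 0 < 1 + ∑ j, t j * g j := by
  have : |∑ j, t j * g j| ≤ ∑ j, |t j| :=
    (abs_sum_le_sum_abs _ _).trans <| sum_le_sum fun j _ => by
      rw [abs_mul]; exact mul_le_of_le_one_right (abs_nonneg _) (hg j)
  linarith [neg_abs_le (∑ j, t j * g j)]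

theorem exists_probability_of_pos_weights {X ι : Type*} [Fintype X] [Nonempty X]
    (ν : X → ℝ) (hν : ∀ x, 0 < ν x) (g : ι → X → ℝ) (h : ∀ i, ∑ x, ν x * g i x = 0) :
    ∃ μ : X → ℝ, (∀ x, 0 ≤ μ x) ∧ ∑ x, μ x = 1 ∧ ∀ i, ∑ x, μ x * g i x = 0 := by
  have hT : 0 < ∑ x, ν x := sum_pos (fun x _ => hν x) univ_nonempty
  refine ⟨fun x => ν x / ∑ y, ν y, fun x => (div_pos (hν x) hT).le, ?_, fun i => ?_⟩
  · rw [← sum_div, div_self hT.ne']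
  · simp only [div_mul_eq_mul_div, ← sum_div, h i, zero_div]

section Correlation

variable {X : Type*} [Fintype X]

noncomputable def corr (u v : X → ℝ) : ℝ := (∑ x, u x * v x) / Fintype.card X

theorem corr_comm (u v : X → ℝ) : corr u v = corr v u := by
  simp only [corr, mul_comm]

theorem corr_self_of_mul_self_eq_one [Nonempty X] {u : X → ℝ} (hu : ∀ x, u x * u x = 1) :
    corr u u = 1 := by
  simp [corr, hu]

theorem corr_eq_zero_iff [Nonempty X] {u v : X → ℝ} : corr u v = 0 ↔ ∑ x, u x * v x = 0 := by
  simp [corr, Fintype.card_ne_zero]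

theorem corr_one_add_sum_mul {ι : Type*} [Fintype ι] {f : X → ℝ} (hf : ∀ x, f x * f x = 1)
    (χ : ι → X → ℝ) (t : ι → ℝ) (i : ι) :
    corr (fun x => 1 + ∑ j, t j * (f x * χ j x)) (fun x => f x * χ i x) =
      corr f (χ i) + ∑ j, corr (χ i) (χ j) * t j := by
  have hpoint : ∀ x, (1 + ∑ j, t j * (f x * χ j x)) * (f x * χ i x) =
      f x * χ i x + ∑ j, t j * (χ i x * χ j x) := fun x => by
    simp only [add_mul, one_mul, sum_mul]
    congr 1
    refine sum_congr rfl fun j _ => ?_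
    linear_combination t j * χ i x * χ j x * hf x
  simp only [corr, hpoint, sum_add_distrib, add_div]
  congr 1
  rw [sum_comm, sum_div]
  refine sum_congr rfl fun j _ => ?_
  rw [← mul_sum]
  ring

end Correlation

theorem stmt10 {X : Type*} [Fintype X] [Nonempty X] {k : ℕ}
    (f : X → ℝ) (χ : Fin k → X → ℝ)
    (hf : ∀ x, f x = 1 ∨ f x = -1) (hχ : ∀ i x, χ i x = 1 ∨ χ i x = -1)
    (h1 : ∑ i : Fin k, |(∑ x : X, f x * χ i x) / (Fintype.card X : ℝ)| < 1 / 2)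
    (h2 : ∀ i : Fin k, ∑ j ∈ Finset.univ.erase i,
        |(∑ x : X, χ i x * χ j x) / (Fintype.card X : ℝ)| ≤ 1 / 2) :
    ∃ μ : X → ℝ, (∀ x, 0 ≤ μ x) ∧ (∑ x : X, μ x) = 1 ∧
      ∀ i : Fin k, ∑ x : X, μ x * (f x * χ i x) = 0 := by
  have habs : ∀ {a : ℝ}, a = 1 ∨ a = -1 → |a| = 1 := (abs_eq zero_le_one).mpr
  let G : Matrix (Fin k) (Fin k) ℝ := Matrix.of fun i j => corr (χ i) (χ j)
  have hdiag : ∀ i, G i i = 1 := fun i =>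
    corr_self_of_mul_self_eq_one fun x => mul_self_eq_one_iff.mpr (hχ i x)
  have hcol : ∀ j, ∑ i ∈ univ.erase j, |G i j| ≤ 1 / 2 := fun j => by
    simp only [G, Matrix.of_apply, corr_comm (χ _) (χ j)]
    exact h2 j
  obtain ⟨t, hGt, ht⟩ := G.exists_mulVec_eq_and_one_sub_mul_sum_abs_le hdiag hcol
    (by norm_num) fun i => -corr f (χ i)
  have ht1 : ∑ j, |t j| < 1 := by
    simp only [abs_neg] at ht
    change ∑ i, |corr f (χ i)| < 1 / 2 at h1
    linarith
  have hweight : ∀ x, 0 < 1 + ∑ j, t j * (f x * χ j x) := fun x =>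
    one_add_sum_mul_pos (fun j => le_of_eq (by rw [abs_mul, habs (hf x), habs (hχ j x), one_mul]))
      ht1
  refine exists_probability_of_pos_weights _ hweight (fun i x => f x * χ i x) fun i => ?_
  rw [← corr_eq_zero_iff, corr_one_add_sum_mul (fun x => mul_self_eq_one_iff.mpr (hf x))]
  change corr f (χ i) + G.mulVec t i = 0
  rw [hGt, add_neg_cancel]
end

section
/- Let f : X → {-1,1} and g : Y → {-1,1} with X, Y ⊆ ℝ^n. Suppose there exist rational functions p₁/q₁ of degree ≤ d (q₁ > 0 on X) and p₂/q₂ of degree ≤ d (q₂ > 0 on Y) with sup_{x∈X} |f(x) - p₁(x)/q₁(x)| + sup_{y∈Y} |g(y) - p₂(y)/q₂(y)| < 1. Then the function (x,y) ↦ f(x) ∧ g(y) (AND of the two ±1-valued functions, with -1 meaning true) is the sign of a polynomial of degree at most 2d on X × Y; i.e., deg_±(f ∧ g) ≤ 2d. -/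
/-!
Clearing denominators, `q₁(x) q₂(y) (1 + p₁(x)/q₁(x) + p₂(y)/q₂(y))` is a polynomial of degree
at most `2d`, and since `q₁ q₂ > 0` it has the sign of `1 + p₁/q₁ + p₂/q₂`. The latter differs
from `1 + f(x) + g(y)` by less than `1`, while `1 + f + g ∈ {-1, 1, 3}`, so both have the sign of
`1 + f + g`, which is `f ∧ g`.
-/

open MvPolynomial

namespace Real

lemma sign_mul_of_pos {c : ℝ} (hc : 0 < c) (t : ℝ) : sign (c * t) = sign t := by
  rcases lt_trichotomy t 0 with ht | rfl | ht
  · rw [sign_of_neg (mul_neg_of_pos_of_neg hc ht), sign_of_neg ht]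
  · rw [mul_zero]
  · rw [sign_of_pos (mul_pos hc ht), sign_of_pos ht]

lemma sign_eq_of_abs_sub_lt {s t : ℝ} (h : |t - s| < |s|) : sign t = sign s := by
  rcases lt_trichotomy s 0 with hs | rfl | hs
  · rw [abs_of_neg hs] at h
    rw [sign_of_neg hs, sign_of_neg (by linarith [(abs_lt.mp h).2])]
  · exact absurd h (by simp)
  · rw [abs_of_pos hs] at h
    rw [sign_of_pos hs, sign_of_pos (by linarith [(abs_lt.mp h).1])]

end Real

lemma and_eq_sign_one_add_add {u v : ℝ} (hu : u = 1 ∨ u = -1) (hv : v = 1 ∨ v = -1) :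
    (if u = -1 ∧ v = -1 then (-1 : ℝ) else 1) = Real.sign (1 + u + v) := by
  rcases hu with rfl | rfl <;> rcases hv with rfl | rfl <;>
    norm_num [Real.sign_of_pos, Real.sign_of_neg]

lemma one_le_abs_one_add_add {u v : ℝ} (hu : u = 1 ∨ u = -1) (hv : v = 1 ∨ v = -1) :
    1 ≤ |1 + u + v| := by
  rcases hu with rfl | rfl <;> rcases hv with rfl | rfl <;> norm_num

section Witness

variable {R σ τ : Type*} [CommSemiring R]

noncomputable def andWitness (p₁ q₁ : MvPolynomial σ R) (p₂ q₂ : MvPolynomial τ R) :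
    MvPolynomial (σ ⊕ τ) R :=
  rename Sum.inl q₁ * rename Sum.inr q₂ + rename Sum.inl p₁ * rename Sum.inr q₂ +
    rename Sum.inr p₂ * rename Sum.inl q₁

lemma totalDegree_rename_mul_rename_le {ι : Type*} (f : σ → ι) (g : τ → ι)
    (p : MvPolynomial σ R) (q : MvPolynomial τ R) {d e : ℕ}
    (hp : p.totalDegree ≤ d) (hq : q.totalDegree ≤ e) :
    (rename f p * rename g q).totalDegree ≤ d + e :=
  (totalDegree_mul _ _).trans
    (add_le_add ((totalDegree_rename_le _ _).trans hp) ((totalDegree_rename_le _ _).trans hq))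

lemma totalDegree_andWitness_le {p₁ q₁ : MvPolynomial σ R} {p₂ q₂ : MvPolynomial τ R}
    {d : ℕ} (hp₁ : p₁.totalDegree ≤ d) (hq₁ : q₁.totalDegree ≤ d)
    (hp₂ : p₂.totalDegree ≤ d) (hq₂ : q₂.totalDegree ≤ d) :
    (andWitness p₁ q₁ p₂ q₂).totalDegree ≤ 2 * d := by
  rw [two_mul]
  refine (totalDegree_add _ _).trans (max_le ((totalDegree_add _ _).trans (max_le ?_ ?_)) ?_)
  · exact totalDegree_rename_mul_rename_le _ _ _ _ hq₁ hq₂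
  · exact totalDegree_rename_mul_rename_le _ _ _ _ hp₁ hq₂
  · exact totalDegree_rename_mul_rename_le _ _ _ _ hp₂ hq₁

lemma eval_andWitness (p₁ q₁ : MvPolynomial σ R) (p₂ q₂ : MvPolynomial τ R) (x : σ → R)
    (y : τ → R) :
    eval (Sum.elim x y) (andWitness p₁ q₁ p₂ q₂) =
      eval x q₁ * eval y q₂ + eval x p₁ * eval y q₂ + eval y p₂ * eval x q₁ := by
  simp only [andWitness, map_add, map_mul, eval_rename, Sum.elim_comp_inl, Sum.elim_comp_inr]

end Witness

lemma eval_andWitness_eq_mul {K σ τ : Type*} [Field K] (p₁ q₁ : MvPolynomial σ K)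
    (p₂ q₂ : MvPolynomial τ K) {x : σ → K} {y : τ → K} (hx : eval x q₁ ≠ 0) (hy : eval y q₂ ≠ 0) :
    eval (Sum.elim x y) (andWitness p₁ q₁ p₂ q₂) =
      eval x q₁ * eval y q₂ * (1 + eval x p₁ / eval x q₁ + eval y p₂ / eval y q₂) := by
  rw [eval_andWitness]
  field_simp

theorem stmt13 {n d : ℕ} (X Y : Set (Fin n → ℝ))
    (f g : (Fin n → ℝ) → ℝ)
    (hf : ∀ x ∈ X, f x = 1 ∨ f x = -1) (hg : ∀ y ∈ Y, g y = 1 ∨ g y = -1)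
    (p₁ q₁ p₂ q₂ : MvPolynomial (Fin n) ℝ)
    (hp₁ : p₁.totalDegree ≤ d) (hq₁ : q₁.totalDegree ≤ d)
    (hp₂ : p₂.totalDegree ≤ d) (hq₂ : q₂.totalDegree ≤ d)
    (hq₁pos : ∀ x ∈ X, 0 < MvPolynomial.eval x q₁)
    (hq₂pos : ∀ y ∈ Y, 0 < MvPolynomial.eval y q₂)
    (ε₁ ε₂ : ℝ) (hε : ε₁ + ε₂ < 1)
    (h₁ : ∀ x ∈ X, |f x - MvPolynomial.eval x p₁ / MvPolynomial.eval x q₁| ≤ ε₁)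
    (h₂ : ∀ y ∈ Y, |g y - MvPolynomial.eval y p₂ / MvPolynomial.eval y q₂| ≤ ε₂) :
    ∃ P : MvPolynomial (Fin n ⊕ Fin n) ℝ, P.totalDegree ≤ 2 * d ∧
      ∀ x ∈ X, ∀ y ∈ Y,
        (if f x = -1 ∧ g y = -1 then (-1 : ℝ) else 1) =
          Real.sign (MvPolynomial.eval (Sum.elim x y) P) := by
  refine ⟨andWitness p₁ q₁ p₂ q₂, totalDegree_andWitness_le hp₁ hq₁ hp₂ hq₂,
    fun x hx y hy => ?_⟩
  set a := eval x p₁ / eval x q₁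
  set b := eval y p₂ / eval y q₂
  have hclose : |(1 + a + b) - (1 + f x + g y)| < |1 + f x + g y| :=
    calc |(1 + a + b) - (1 + f x + g y)| = |(f x - a) + (g y - b)| := by
          rw [← abs_neg]; ring_nf
      _ ≤ |f x - a| + |g y - b| := abs_add_le _ _
      _ < 1 := by linarith [h₁ x hx, h₂ y hy]
      _ ≤ |1 + f x + g y| := one_le_abs_one_add_add (hf x hx) (hg y hy)
  rw [eval_andWitness_eq_mul _ _ _ _ (hq₁pos x hx).ne' (hq₂pos y hy).ne',
    Real.sign_mul_of_pos (mul_pos (hq₁pos x hx) (hq₂pos y hy)),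
    Real.sign_eq_of_abs_sub_lt hclose,
    and_eq_sign_one_add_add (hf x hx) (hg y hy)]
end

section
/- Let k = ⌊αn⌋ for a suitable small constant α > 0, fix weights w₁,…,w_n ∈ {0,…,2^{k+1}-1}, and suppose for each s ∈ {±1, ±2, …, ±2^k} there is a probability distribution μ_s supported on X_s = {x ∈ {0,1}^n : Σ w_i x_i ≡ s (mod 2^{k+1})} such that E_{μ_s}[p(x)] = E_{μ_r}[p(x)] for all such s, r and every polynomial p of degree ≤ k. Define f : {0,1}^n × {0,…,n} → {-1,1} by f(x,t) = sign(1/2 + Σ w_i x_i - 2^{k+1} t). Then for every d = 0, 1, …, k: R⁺(f, d) ≥ R⁺({±1, ±2, …, ±2^k}, d), where the right-hand side is the least error in approximating sign(x) by a degree-d rational function with positive denominator on {±1,…,±2^k}. -/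
/-!
Given `p / q` approximating `f` within `e`, average it along the points `(x, ℓ(x, s))`:
`P(s) = E_{μ_s} p(x, ℓ(x, s))` and `Q(s) = E_{μ_s} q(x, ℓ(x, s))`. Since `ℓ` is affine in
`(x, s)`, substituting it does not raise degrees, so by moment matching (`d ≤ k`) both averages
may be taken against one fixed `μ₁`, which makes `P` and `Q` univariate polynomials of degree
`≤ d` in `s`. On the support of `μ_s` the point `(x, ℓ(x, s))` lies in the domain of `f` and
`f = sign s` there, so `P(s) / Q(s)` is a weighted mediant of quotients within `e` of `sign s`.
-/

/-- Point of the domain `{0,1}^n × {0,1,…,n}` as a real assignment of the `n+1` variables. -/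
noncomputable def emb {n : ℕ} (xt : (Fin n → Bool) × Fin (n + 1)) : Fin n ⊕ Unit → ℝ :=
  Sum.elim (fun i => if xt.1 i then 1 else 0) (fun _ => (xt.2 : ℝ))

/-- `R⁺(f,d)` for `f` on `{0,1}^n × {0,1,…,n}`: least error of a degree-`d` rational
approximant with positive denominator. -/
noncomputable def RposF {n : ℕ} (f : (Fin n → Bool) × Fin (n + 1) → ℝ) (d : ℕ) : ℝ :=
  sInf { e : ℝ | ∃ p q : MvPolynomial (Fin n ⊕ Unit) ℝ,
    p.totalDegree ≤ d ∧ q.totalDegree ≤ d ∧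
    ∀ xt : (Fin n → Bool) × Fin (n + 1),
      0 < MvPolynomial.eval (emb xt) q ∧
      |f xt - MvPolynomial.eval (emb xt) p / MvPolynomial.eval (emb xt) q| ≤ e }

/-- `R⁺(S,d)` for `S ⊆ ℤ`: least error of a univariate degree-`d` rational approximant,
with positive denominator on `S`, to the sign function on `S`. -/
noncomputable def RposSign (S : Set ℤ) (d : ℕ) : ℝ :=
  sInf { e : ℝ | ∃ p q : Polynomial ℝ, p.natDegree ≤ d ∧ q.natDegree ≤ d ∧
    ∀ s ∈ S, 0 < q.eval (s : ℝ) ∧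
      |Real.sign (s : ℝ) - p.eval (s : ℝ) / q.eval (s : ℝ)| ≤ e }

open Polynomial in
theorem MvPolynomial.natDegree_aeval_le_totalDegree {R σ : Type*} [CommSemiring R]
    (g : σ → R[X]) (hg : ∀ v, (g v).natDegree ≤ 1) (p : MvPolynomial σ R) :
    (aeval g p).natDegree ≤ p.totalDegree := by
  rw [aeval_def, eval₂_eq]
  refine natDegree_sum_le_of_forall_le _ _ fun m hm => ?_
  calc (algebraMap R R[X] (coeff m p) * ∏ v ∈ m.support, g v ^ m v).natDegree
      ≤ ∑ v ∈ m.support, (g v ^ m v).natDegree :=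
        (natDegree_C_mul_le _ _).trans (natDegree_prod_le _ _)
    _ ≤ ∑ v ∈ m.support, m v :=
        Finset.sum_le_sum fun v _ =>
          natDegree_pow_le.trans (by simpa using Nat.mul_le_mul_left (m v) (hg v))
    _ ≤ p.totalDegree := le_totalDegree hm

theorem MvPolynomial.totalDegree_aeval_le_totalDegree {R σ τ : Type*} [CommSemiring R]
    (g : σ → MvPolynomial τ R) (hg : ∀ v, (g v).totalDegree ≤ 1) (p : MvPolynomial σ R) :
    (aeval g p).totalDegree ≤ p.totalDegree := by
  rw [aeval_def, eval₂_eq]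
  refine (totalDegree_finsetSum _ _).trans (Finset.sup_le fun m hm => ?_)
  calc (algebraMap R (MvPolynomial τ R) (coeff m p) * ∏ v ∈ m.support, g v ^ m v).totalDegree
      ≤ ∑ v ∈ m.support, (g v ^ m v).totalDegree :=
        (totalDegree_mul _ _).trans <| by
          rw [algebraMap_eq, totalDegree_C, zero_add]; exact totalDegree_finsetProd _ _
    _ ≤ ∑ v ∈ m.support, m v :=
        Finset.sum_le_sum fun v _ =>
          (totalDegree_pow _ _).trans (by simpa using Nat.mul_le_mul_left (m v) (hg v))
    _ ≤ p.totalDegree := le_totalDegree hm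

theorem MvPolynomial.eval_aeval_polynomial {R σ : Type*} [CommSemiring R]
    (g : σ → Polynomial R) (p : MvPolynomial σ R) (s : R) :
    (aeval g p).eval s = eval (fun v => (g v).eval s) p := by
  simpa [Polynomial.coe_aeval_eq_eval, MvPolynomial.coe_aeval_eq_eval] using
    comp_aeval_apply (Polynomial.aeval s) p (f := g)

theorem MvPolynomial.eval_aeval {R σ τ : Type*} [CommSemiring R] (g : σ → MvPolynomial τ R)
    (p : MvPolynomial σ R) (x : τ → R) :
    eval x (aeval g p) = eval (fun v => eval x (g v)) p := by
  simpa [MvPolynomial.coe_aeval_eq_eval] using comp_aeval_apply (aeval x) p (f := g)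

theorem sum_mul_pos_and_abs_sub_sum_div_sum_le {ι : Type*} (s : Finset ι) {μ P Q : ι → ℝ}
    {c e : ℝ} (hμ : ∀ i ∈ s, 0 ≤ μ i) (hsupp : ∃ i ∈ s, μ i ≠ 0)
    (h : ∀ i ∈ s, μ i ≠ 0 → 0 < Q i ∧ |c - P i / Q i| ≤ e) :
    0 < ∑ i ∈ s, μ i * Q i ∧ |c - (∑ i ∈ s, μ i * P i) / ∑ i ∈ s, μ i * Q i| ≤ e := by
  have abs_sub_div_le_iff {a b : ℝ} (hb : 0 < b) :
      |c - a / b| ≤ e ↔ |c * b - a| ≤ e * b := by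
    rw [← div_le_iff₀ hb, ← abs_of_pos hb, ← abs_div, abs_of_pos hb, sub_div,
      mul_div_cancel_right₀ _ hb.ne']
  have hterm : ∀ i ∈ s, |c * (μ i * Q i) - μ i * P i| ≤ μ i * (e * Q i) := by
    intro i hi
    rcases eq_or_ne (μ i) 0 with h0 | h0
    · simp [h0]
    obtain ⟨hQ, hle⟩ := h i hi h0
    rw [show c * (μ i * Q i) - μ i * P i = μ i * (c * Q i - P i) by ring, abs_mul,
      abs_of_nonneg (hμ i hi)]
    exact mul_le_mul_of_nonneg_left ((abs_sub_div_le_iff hQ).1 hle) (hμ i hi)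
  obtain ⟨i₀, hi₀, hμi₀⟩ := hsupp
  have hpos : 0 < ∑ i ∈ s, μ i * Q i := by
    refine Finset.sum_pos' (fun i hi => ?_) ⟨i₀, hi₀, ?_⟩
    · rcases eq_or_ne (μ i) 0 with h0 | h0
      · simp [h0]
      · exact mul_nonneg (hμ i hi) (h i hi h0).1.le
    · exact mul_pos ((hμ i₀ hi₀).lt_of_ne' hμi₀) (h i₀ hi₀ hμi₀).1
  refine ⟨hpos, (abs_sub_div_le_iff hpos).2 ?_⟩
  calc |c * ∑ i ∈ s, μ i * Q i - ∑ i ∈ s, μ i * P i|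
      = |∑ i ∈ s, (c * (μ i * Q i) - μ i * P i)| := by
        rw [Finset.mul_sum, Finset.sum_sub_distrib]
    _ ≤ ∑ i ∈ s, μ i * (e * Q i) :=
        (Finset.abs_sum_le_sum_abs _ _).trans (Finset.sum_le_sum hterm)
    _ = e * ∑ i ∈ s, μ i * Q i := by
        rw [Finset.mul_sum]; exact Finset.sum_congr rfl fun i _ => by ring

theorem Real.sign_half_add_intCast {s : ℤ} (hs : s ≠ 0) :
    Real.sign (1 / 2 + s) = Real.sign s := by
  rcases hs.lt_or_gt with h | h
  · have : (s : ℝ) ≤ -1 := by exact_mod_cast (by omega : s ≤ -1)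
    rw [Real.sign_of_neg (by linarith), Real.sign_of_neg (by linarith)]
  · have : (1 : ℝ) ≤ s := by exact_mod_cast h
    rw [Real.sign_of_pos (by linarith), Real.sign_of_pos (by linarith)]

theorem Real.abs_sign_le_one (r : ℝ) : |Real.sign r| ≤ 1 := by
  rcases Real.sign_apply_eq r with h | h | h <;> simp [h]

theorem Int.nonneg_and_le_of_sub_eq_mul {m n c s t : ℤ} (hm : 0 < m) (hn : 0 ≤ n) (hc : 0 ≤ c)
    (hcn : c ≤ n * (2 * m - 1)) (hs : |s| ≤ m) (h : c - s = 2 * m * t) : 0 ≤ t ∧ t ≤ n := by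
  obtain ⟨hs₁, hs₂⟩ := abs_le.1 hs
  constructor <;> by_contra! ht <;> nlinarith

namespace ThresholdLift

variable {n : ℕ} (k : ℕ) (w : Fin n → ℕ)

def weightedSum (R : Type*) [Semiring R] (x : Fin n → Bool) : R :=
  ∑ i, (w i : R) * if x i then 1 else 0

theorem intCast_weightedSum (x : Fin n → Bool) :
    ((weightedSum w ℤ x : ℤ) : ℝ) = weightedSum w ℝ x := by
  simp only [weightedSum]; push_cast; rfl

theorem weightedSum_nonneg (x : Fin n → Bool) : 0 ≤ weightedSum w ℤ x :=
  Finset.sum_nonneg fun i _ => by split_ifs <;> simp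

theorem weightedSum_le {B : ℤ} (hB : 0 ≤ B) (hw : ∀ i, (w i : ℤ) ≤ B) (x : Fin n → Bool) :
    weightedSum w ℤ x ≤ n * B :=
  calc weightedSum w ℤ x ≤ ∑ _i : Fin n, B :=
        Finset.sum_le_sum fun i _ => by split_ifs <;> simp [hw i, hB]
    _ = n * B := by simp

/-- The point `(x, ℓ(x, s))` with `ℓ(x, s) = 2^{-(k+1)} (∑ wᵢxᵢ - s)`. -/
noncomputable def levelPoint (x : Fin n → Bool) (s : ℝ) : Fin n ⊕ Unit → ℝ :=
  Sum.elim (fun i => if x i then 1 else 0) fun _ => (2 ^ (k + 1))⁻¹ * (weightedSum w ℝ x - s)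

open Polynomial in
/-- `s ↦ r(x, ℓ(x, s))` as a univariate polynomial. -/
noncomputable def levelPoly (x : Fin n → Bool) (r : MvPolynomial (Fin n ⊕ Unit) ℝ) : ℝ[X] :=
  MvPolynomial.aeval (Sum.elim (fun i => C (if x i then 1 else 0))
    fun _ => C (2 ^ (k + 1))⁻¹ * (C (weightedSum w ℝ x) - X)) r

open MvPolynomial in
/-- `x ↦ r(x, ℓ(x, s))` as a polynomial in the `n` Boolean variables. -/
noncomputable def levelSubst (s : ℝ) (r : MvPolynomial (Fin n ⊕ Unit) ℝ) :
    MvPolynomial (Fin n) ℝ :=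
  aeval (Sum.elim X fun _ => C (2 ^ (k + 1))⁻¹ * (∑ i, C (w i : ℝ) * X i - C s)) r

open Polynomial in
theorem natDegree_levelPoly_le (x : Fin n → Bool) (r : MvPolynomial (Fin n ⊕ Unit) ℝ) :
    (levelPoly k w x r).natDegree ≤ r.totalDegree := by
  refine MvPolynomial.natDegree_aeval_le_totalDegree _ (fun v => ?_) r
  rcases v with i | _
  · exact (natDegree_C _).trans_le zero_le_one
  · exact (natDegree_C_mul_le _ _).trans <| (natDegree_sub_le _ _).trans (by simp)

theorem eval_levelPoly (x : Fin n → Bool) (r : MvPolynomial (Fin n ⊕ Unit) ℝ) (s : ℝ) :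
    (levelPoly k w x r).eval s = MvPolynomial.eval (levelPoint k w x s) r := by
  rw [levelPoly, MvPolynomial.eval_aeval_polynomial]
  refine congrArg (MvPolynomial.eval · r) (funext fun v => ?_)
  rcases v with i | _
  · simp only [Sum.elim_inl, Polynomial.eval_C, levelPoint]
  · simp [levelPoint]

open MvPolynomial in
theorem totalDegree_levelSubst_le (s : ℝ) (r : MvPolynomial (Fin n ⊕ Unit) ℝ) :
    (levelSubst k w s r).totalDegree ≤ r.totalDegree := by
  refine totalDegree_aeval_le_totalDegree _ (fun v => ?_) r
  rcases v with i | _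
  · simp [totalDegree_X]
  · refine (totalDegree_mul _ _).trans ?_
    rw [totalDegree_C, zero_add]
    refine (totalDegree_sub _ _).trans (max_le ?_ (by simp))
    refine (totalDegree_finsetSum _ _).trans (Finset.sup_le fun i _ => ?_)
    exact (totalDegree_mul _ _).trans (by rw [totalDegree_C, totalDegree_X])

theorem eval_levelSubst (s : ℝ) (r : MvPolynomial (Fin n ⊕ Unit) ℝ) (x : Fin n → Bool) :
    MvPolynomial.eval (fun i => if x i then 1 else 0) (levelSubst k w s r) =
      MvPolynomial.eval (levelPoint k w x s) r := by
  rw [levelSubst, MvPolynomial.eval_aeval]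
  refine congrArg (MvPolynomial.eval · r) (funext fun v => ?_)
  rcases v with i | _ <;> simp [levelPoint, weightedSum]

theorem exists_emb_eq_levelPoint (hw : ∀ i, w i < 2 ^ (k + 1)) {s : ℤ} (hs : |s| ≤ 2 ^ k)
    {x : Fin n → Bool} (hx : weightedSum w ℤ x ≡ s [ZMOD 2 ^ (k + 1)]) :
    ∃ t : Fin (n + 1), emb (x, t) = levelPoint k w x s ∧
      weightedSum w ℝ x - 2 ^ (k + 1) * (t : ℝ) = s := by
  obtain ⟨t, ht⟩ := hx.symm.dvd
  have hwB : ∀ i, (w i : ℤ) ≤ 2 * 2 ^ k - 1 := fun i => by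
    have : (w i : ℤ) < 2 * 2 ^ k := by exact_mod_cast pow_succ' 2 k ▸ hw i
    omega
  have hk : (0 : ℤ) < 2 ^ k := by positivity
  obtain ⟨ht₀, htn⟩ := Int.nonneg_and_le_of_sub_eq_mul hk (Int.natCast_nonneg n)
    (weightedSum_nonneg w x) (weightedSum_le w (by omega) hwB x) hs
    (by rw [ht, pow_succ, mul_comm _ 2])
  lift t to ℕ using ht₀
  have hlevel : weightedSum w ℝ x - 2 ^ (k + 1) * (t : ℝ) = s := by
    have := congrArg (Int.cast : ℤ → ℝ) ht
    push_cast [intCast_weightedSum] at this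
    linarith
  refine ⟨⟨t, by omega⟩, funext fun v => ?_, hlevel⟩
  rcases v with i | _
  · rfl
  · simp only [emb, levelPoint, Sum.elim_inr]
    field_simp
    linarith

open Polynomial in
noncomputable def levelAverage (μ : (Fin n → Bool) → ℝ) (r : MvPolynomial (Fin n ⊕ Unit) ℝ) :
    ℝ[X] :=
  ∑ x, C (μ x) * levelPoly k w x r

theorem natDegree_levelAverage_le (μ : (Fin n → Bool) → ℝ) (r : MvPolynomial (Fin n ⊕ Unit) ℝ) :
    (levelAverage k w μ r).natDegree ≤ r.totalDegree :=
  Polynomial.natDegree_sum_le_of_forall_le _ _ fun x _ =>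
    (Polynomial.natDegree_C_mul_le _ _).trans (natDegree_levelPoly_le k w x r)

theorem eval_levelAverage (μ : (Fin n → Bool) → ℝ) (r : MvPolynomial (Fin n ⊕ Unit) ℝ) (s : ℝ) :
    (levelAverage k w μ r).eval s = ∑ x, μ x * MvPolynomial.eval (levelPoint k w x s) r := by
  simp [levelAverage, Polynomial.eval_finsetSum, eval_levelPoly]

theorem sum_mul_eval_levelPoint_eq {μ μ' : (Fin n → Bool) → ℝ} {D : ℕ}
    (hmom : ∀ p : MvPolynomial (Fin n) ℝ, p.totalDegree ≤ D →
      ∑ x, μ x * MvPolynomial.eval (fun i => if x i then 1 else 0) p =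
        ∑ x, μ' x * MvPolynomial.eval (fun i => if x i then 1 else 0) p)
    {r : MvPolynomial (Fin n ⊕ Unit) ℝ} (hr : r.totalDegree ≤ D) (s : ℝ) :
    ∑ x, μ x * MvPolynomial.eval (levelPoint k w x s) r =
      ∑ x, μ' x * MvPolynomial.eval (levelPoint k w x s) r := by
  simpa only [eval_levelSubst] using hmom _ ((totalDegree_levelSubst_le k w s r).trans hr)

def signPoints : Set ℤ := {s | s ≠ 0 ∧ |s| ≤ 2 ^ k}

theorem exists_sign_approx_of_approx (hw : ∀ i, w i < 2 ^ (k + 1))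
    {μ₀ : (Fin n → Bool) → ℝ} {μ : ℤ → (Fin n → Bool) → ℝ}
    (hμ0 : ∀ s ∈ signPoints k, ∀ x, 0 ≤ μ s x)
    (hμ1 : ∀ s ∈ signPoints k, ∑ x, μ s x = 1)
    (hsupp : ∀ s ∈ signPoints k, ∀ x, μ s x ≠ 0 → weightedSum w ℤ x ≡ s [ZMOD 2 ^ (k + 1)])
    (hmom : ∀ s ∈ signPoints k, ∀ p : MvPolynomial (Fin n) ℝ, p.totalDegree ≤ k →
      ∑ x, μ₀ x * MvPolynomial.eval (fun i => if x i then 1 else 0) p =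
        ∑ x, μ s x * MvPolynomial.eval (fun i => if x i then 1 else 0) p)
    {d : ℕ} (hd : d ≤ k) {e : ℝ} {p q : MvPolynomial (Fin n ⊕ Unit) ℝ}
    (hp : p.totalDegree ≤ d) (hq : q.totalDegree ≤ d)
    (hpq : ∀ xt : (Fin n → Bool) × Fin (n + 1), 0 < MvPolynomial.eval (emb xt) q ∧
      |Real.sign (1 / 2 + weightedSum w ℝ xt.1 - 2 ^ (k + 1) * (xt.2 : ℝ)) -
        MvPolynomial.eval (emb xt) p / MvPolynomial.eval (emb xt) q| ≤ e) :
    ∃ P Q : Polynomial ℝ, P.natDegree ≤ d ∧ Q.natDegree ≤ d ∧ ∀ s ∈ signPoints k,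
      0 < Q.eval (s : ℝ) ∧ |Real.sign (s : ℝ) - P.eval (s : ℝ) / Q.eval (s : ℝ)| ≤ e := by
  refine ⟨levelAverage k w μ₀ p, levelAverage k w μ₀ q,
    (natDegree_levelAverage_le k w μ₀ p).trans hp, (natDegree_levelAverage_le k w μ₀ q).trans hq,
    fun s hs => ?_⟩
  rw [eval_levelAverage, eval_levelAverage,
    sum_mul_eval_levelPoint_eq k w (hmom s hs) (hp.trans hd),
    sum_mul_eval_levelPoint_eq k w (hmom s hs) (hq.trans hd)]
  refine sum_mul_pos_and_abs_sub_sum_div_sum_le _ (fun x _ => hμ0 s hs x) ?_ fun x _ hx => ?_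
  · obtain ⟨x, -, hx⟩ := Finset.exists_ne_zero_of_sum_ne_zero (s := Finset.univ)
      ((hμ1 s hs).trans_ne one_ne_zero)
    exact ⟨x, Finset.mem_univ x, hx⟩
  · obtain ⟨t, hemb, hlevel⟩ := exists_emb_eq_levelPoint k w hw hs.2 (hsupp s hs x hx)
    rw [← hemb, ← Real.sign_half_add_intCast hs.1, ← hlevel, ← add_sub_assoc]
    exact hpq (x, t)

end ThresholdLift

theorem stmt15 {n : ℕ} (k : ℕ) (w : Fin n → ℕ) (hw : ∀ i, w i < 2 ^ (k + 1))
    (μ : ℤ → (Fin n → Bool) → ℝ)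
    (hμ0 : ∀ s ∈ {s : ℤ | s ≠ 0 ∧ |s| ≤ 2 ^ k}, ∀ x, 0 ≤ μ s x)
    (hμ1 : ∀ s ∈ {s : ℤ | s ≠ 0 ∧ |s| ≤ 2 ^ k}, (∑ x : Fin n → Bool, μ s x) = 1)
    (hsupp : ∀ s ∈ {s : ℤ | s ≠ 0 ∧ |s| ≤ 2 ^ k}, ∀ x : Fin n → Bool, μ s x ≠ 0 →
      (∑ i : Fin n, (w i : ℤ) * (if x i then 1 else 0)) ≡ s [ZMOD (2 ^ (k + 1))])
    (hmom : ∀ s ∈ {s : ℤ | s ≠ 0 ∧ |s| ≤ 2 ^ k}, ∀ r ∈ {s : ℤ | s ≠ 0 ∧ |s| ≤ 2 ^ k},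
      ∀ p : MvPolynomial (Fin n) ℝ, p.totalDegree ≤ k →
        (∑ x : Fin n → Bool,
            μ s x * MvPolynomial.eval (fun i => if x i then (1 : ℝ) else 0) p) =
          ∑ x : Fin n → Bool,
            μ r x * MvPolynomial.eval (fun i => if x i then (1 : ℝ) else 0) p) :
    ∀ d ≤ k,
      RposSign {s : ℤ | s ≠ 0 ∧ |s| ≤ 2 ^ k} d ≤
        RposF (fun xt : (Fin n → Bool) × Fin (n + 1) =>
          Real.sign (1 / 2 + ∑ i : Fin n, (w i : ℝ) * (if xt.1 i then 1 else 0)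
            - 2 ^ (k + 1) * (xt.2 : ℝ))) d := by
  intro d hd
  have one_mem : (1 : ℤ) ∈ ThresholdLift.signPoints k := ⟨one_ne_zero, by simp [one_le_pow₀]⟩
  unfold RposSign RposF
  refine csInf_le_csInf ⟨0, ?_⟩ ⟨1, 0, 1, by simp, by simp, fun xt => ⟨by simp, ?_⟩⟩ ?_
  · rintro e ⟨P, Q, -, -, h⟩
    exact (abs_nonneg _).trans (h 1 one_mem).2
  · simpa using Real.abs_sign_le_one _
  · rintro e ⟨p, q, hp, hq, hpq⟩
    exact ThresholdLift.exists_sign_approx_of_approx k w hw hμ0 hμ1 hsupp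
      (hmom 1 one_mem) hd hp hq hpq
end

section
/- Let F : {0,1}^{n₁} × ⋯ × {0,1}^{n_k} → {-1,1} satisfy F(x₁,…,x_k) = f(|x₁|,…,|x_k|) for some f : {0,…,n₁} × ⋯ × {0,…,n_k} → {-1,1}, where |x| denotes the Hamming weight. Then for every d ≥ 0, R⁺(F, d) = R⁺(f, d). -/
/-!
Given an approximant `p / q` of `F` with `q > 0`, average `p` and `q` over each level set
`{x | |xᵢ| = tᵢ for all i}`. Since `F` equals `f t` on that level set, the mediant inequality keeps
both the positivity of the denominator and the error bound. The averages are polynomials in `t`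
of degree at most `deg p`, `deg q` (Minsky–Papert): the mean of a monomial whose support meets
block `i` in `sᵢ` coordinates is `∏ᵢ (tᵢ)_{sᵢ} / (mᵢ)_{sᵢ}`, a product of falling factorials.
Conversely, substituting `tᵢ = ∑ⱼ xᵢⱼ` turns an approximant of `f` into one of `F` without
raising the degree.
-/

open Finset MvPolynomial
open scoped BigOperators

/-- `R⁺(F,d)` for `F` on `{0,1}^{n₁} × ⋯ × {0,1}^{n_k}`: least error of a degree-`d`
multivariate rational approximant with positive denominator. -/
noncomputable def RposProd {k : ℕ} {m : Fin k → ℕ}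
    (F : (∀ i : Fin k, Fin (m i) → Bool) → ℝ) (d : ℕ) : ℝ :=
  sInf { e : ℝ | ∃ p q : MvPolynomial ((i : Fin k) × Fin (m i)) ℝ,
    p.totalDegree ≤ d ∧ q.totalDegree ≤ d ∧
    ∀ x : ∀ i : Fin k, Fin (m i) → Bool,
      0 < MvPolynomial.eval (fun v => if x v.1 v.2 then (1 : ℝ) else 0) q ∧
      |F x - MvPolynomial.eval (fun v => if x v.1 v.2 then (1 : ℝ) else 0) p /
          MvPolynomial.eval (fun v => if x v.1 v.2 then (1 : ℝ) else 0) q| ≤ e }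

/-- `R⁺(f,d)` for `f` on `{0,…,n₁} × ⋯ × {0,…,n_k}`: least error of a degree-`d`
rational approximant (in `k` variables) with positive denominator. -/
noncomputable def RposWt {k : ℕ} (m : Fin k → ℕ) (f : (Fin k → ℕ) → ℝ) (d : ℕ) : ℝ :=
  sInf { e : ℝ | ∃ p q : MvPolynomial (Fin k) ℝ,
    p.totalDegree ≤ d ∧ q.totalDegree ≤ d ∧
    ∀ t : Fin k → ℕ, (∀ i, t i ≤ m i) →
      0 < MvPolynomial.eval (fun i => (t i : ℝ)) q ∧
      |f t - MvPolynomial.eval (fun i => (t i : ℝ)) p /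
          MvPolynomial.eval (fun i => (t i : ℝ)) q| ≤ e }

theorem Finset.card_filter_powersetCard_subset_mul_descFactorial {α : Type*} [DecidableEq α]
    (s t : Finset α) (n : ℕ) (hst : s ⊆ t) :
    #{B ∈ t.powersetCard n | s ⊆ B} * (#t).descFactorial #s =
      (#t).choose n * n.descFactorial #s := by
  by_cases hsn : #s ≤ n
  · rw [card_filter_powersetCard_subset s t n hst hsn, Nat.descFactorial_eq_factorial_mul_choose,
      Nat.descFactorial_eq_factorial_mul_choose, mul_left_comm ((#t).choose n), Nat.choose_mul hsn]
    ring
  · have hempty : {B ∈ t.powersetCard n | s ⊆ B} = ∅ :=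
      filter_false_of_mem fun B hB hsB =>
        hsn ((card_le_card hsB).trans (mem_powersetCard.1 hB).2.le)
    rw [hempty, Nat.descFactorial_eq_zero_iff_lt.2 (not_le.1 hsn)]
    simp

theorem Finset.expect_powersetCard_univ_ite_subset {α K : Type*} [Fintype α] [DecidableEq α]
    [Semifield K] [CharZero K] (s : Finset α) {n : ℕ} (hn : n ≤ Fintype.card α) :
    𝔼 B ∈ powersetCard n univ, (if s ⊆ B then (1 : K) else 0)
      = n.descFactorial #s / (Fintype.card α).descFactorial #s := by
  have hcount := card_filter_powersetCard_subset_mul_descFactorial s univ n (subset_univ s)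
  rw [card_univ] at hcount
  have hchoose : ((Fintype.card α).choose n : K) ≠ 0 := by
    exact_mod_cast (Nat.choose_pos hn).ne'
  have hdesc : ((Fintype.card α).descFactorial #s : K) ≠ 0 := by
    exact_mod_cast (Nat.descFactorial_eq_zero_iff_lt.not).2 (not_lt.2 (card_le_univ s))
  rw [expect_eq_sum_div_card, sum_boole, card_powersetCard, card_univ, div_eq_div_iff hchoose hdesc,
    mul_comm _ ((Fintype.card α).choose n : K)]
  exact_mod_cast hcount

theorem Finset.expect_piFinset_prod {ι K : Type*} [Fintype ι] [DecidableEq ι] {κ : ι → Type*}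
    [Semifield K] [CharZero K] (t : ∀ i, Finset (κ i)) (f : ∀ i, κ i → K) :
    𝔼 x ∈ Fintype.piFinset t, ∏ i, f i (x i) = ∏ i, 𝔼 j ∈ t i, f i j := by
  simp only [expect_eq_sum_div_card, ← prod_univ_sum, Fintype.card_piFinset, Nat.cast_prod,
    prod_div_distrib]

theorem abs_sub_expect_div_expect_le {ι : Type*} {s : Finset ι} (hs : s.Nonempty)
    {p q : ι → ℝ} {c e : ℝ} (h : ∀ i ∈ s, 0 < q i ∧ |c - p i / q i| ≤ e) :
    |c - (𝔼 i ∈ s, p i) / 𝔼 i ∈ s, q i| ≤ e := by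
  have hdiv {a b : ℝ} (hb : 0 < b) : |c - a / b| ≤ e ↔ |c * b - a| ≤ e * b := by
    rw [sub_div' hb.ne', abs_div, abs_of_pos hb, div_le_iff₀ hb]
  refine (hdiv (expect_pos (fun i hi => (h i hi).1) hs)).2 ?_
  calc |c * 𝔼 i ∈ s, q i - 𝔼 i ∈ s, p i| = |𝔼 i ∈ s, (c * q i - p i)| := by
        rw [expect_sub_distrib, mul_expect]
    _ ≤ 𝔼 i ∈ s, |c * q i - p i| := abs_expect_le _ _
    _ ≤ 𝔼 i ∈ s, e * q i := expect_le_expect fun i hi => (hdiv (h i hi).1).1 (h i hi).2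
    _ = e * 𝔼 i ∈ s, q i := (mul_expect _ _ _).symm

theorem Polynomial.totalDegree_toMvPolynomial_le {R σ : Type*} [CommSemiring R]
    (p : Polynomial R) (i : σ) : (p.toMvPolynomial i).totalDegree ≤ p.natDegree := by
  conv_lhs => rw [p.as_sum_range_C_mul_X_pow]
  simp only [map_sum, map_mul, map_pow, toMvPolynomial_C, toMvPolynomial_X]
  refine (totalDegree_finsetSum _ _).trans (Finset.sup_le fun n hn => ?_)
  refine (totalDegree_mul _ _).trans ?_
  rw [totalDegree_C, zero_add, MvPolynomial.X_pow_eq_monomial]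
  exact (totalDegree_monomial_le _ _).trans (by simpa [Nat.lt_succ_iff] using hn)

theorem MvPolynomial.totalDegree_bind₁_le {R σ τ : Type*} [CommSemiring R]
    (g : σ → MvPolynomial τ R) (hg : ∀ i, (g i).totalDegree ≤ 1) (p : MvPolynomial σ R) :
    (bind₁ g p).totalDegree ≤ p.totalDegree := by
  conv_lhs => rw [p.as_sum]
  rw [map_sum]
  refine (totalDegree_finsetSum _ _).trans (Finset.sup_le fun a ha => ?_)
  rw [bind₁_monomial]
  refine (totalDegree_mul _ _).trans ?_
  rw [totalDegree_C, zero_add]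
  refine (totalDegree_finsetProd _ _).trans ?_
  calc ∑ i ∈ a.support, (g i ^ a i).totalDegree
      ≤ ∑ i ∈ a.support, a i := Finset.sum_le_sum fun i _ =>
        (totalDegree_pow _ _).trans (by simpa using Nat.mul_le_mul_left (a i) (hg i))
    _ ≤ p.totalDegree := le_totalDegree ha

section Symmetrization

variable {k : ℕ} {m : Fin k → ℕ}

/-- A point `x` of the product of cubes is encoded by its supports `A i = {j | x i j}`. -/
def levelSet (m : Fin k → ℕ) (t : Fin k → ℕ) : Finset (∀ i, Finset (Fin (m i))) :=
  Fintype.piFinset fun i => powersetCard (t i) univ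

def indicatorPoint (A : ∀ i, Finset (Fin (m i))) : (Σ i, Fin (m i)) → ℝ :=
  fun v => if v.2 ∈ A v.1 then 1 else 0

def blockSupport (a : (Σ i, Fin (m i)) →₀ ℕ) (i : Fin k) : Finset (Fin (m i)) :=
  {j | a ⟨i, j⟩ ≠ 0}

/-- Evaluated at `t`, this is the mean of the monomial `a` over `levelSet m t`. -/
noncomputable def symMonomial (a : (Σ i, Fin (m i)) →₀ ℕ) : MvPolynomial (Fin k) ℝ :=
  ∏ i, C ((m i).descFactorial #(blockSupport a i) : ℝ)⁻¹ *
    (descPochhammer ℝ #(blockSupport a i)).toMvPolynomial i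

noncomputable def symmetrize (p : MvPolynomial (Σ i, Fin (m i)) ℝ) : MvPolynomial (Fin k) ℝ :=
  ∑ a ∈ p.support, C (p.coeff a) * symMonomial a

theorem levelSet_nonempty {t : Fin k → ℕ} (ht : ∀ i, t i ≤ m i) : (levelSet m t).Nonempty :=
  Fintype.piFinset_nonempty.2 fun i => powersetCard_nonempty.2 (by simpa using ht i)

theorem card_eq_of_mem_levelSet {t : Fin k → ℕ} {A : ∀ i, Finset (Fin (m i))}
    (hA : A ∈ levelSet m t) (i : Fin k) : #(A i) = t i :=
  (mem_powersetCard.1 (Fintype.mem_piFinset.1 hA i)).2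

theorem support_eq_sigma_blockSupport (a : (Σ i, Fin (m i)) →₀ ℕ) :
    a.support = univ.sigma (blockSupport a) := by
  ext ⟨i, j⟩
  simp [blockSupport]

theorem sum_card_blockSupport_le (a : (Σ i, Fin (m i)) →₀ ℕ) :
    ∑ i, #(blockSupport a i) ≤ a.sum fun _ e => e := by
  rw [← card_sigma, ← support_eq_sigma_blockSupport, Finsupp.sum, card_eq_sum_ones]
  exact sum_le_sum fun v hv => Nat.one_le_iff_ne_zero.2 (Finsupp.mem_support_iff.1 hv)

theorem totalDegree_symMonomial_le (a : (Σ i, Fin (m i)) →₀ ℕ) :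
    (symMonomial a).totalDegree ≤ a.sum fun _ e => e := by
  refine (totalDegree_finsetProd _ _).trans ((sum_le_sum fun i _ => ?_).trans
    (sum_card_blockSupport_le a))
  refine (totalDegree_mul _ _).trans ?_
  rw [totalDegree_C, zero_add]
  exact (Polynomial.totalDegree_toMvPolynomial_le _ _).trans (descPochhammer_natDegree _ _).le

theorem totalDegree_symmetrize_le (p : MvPolynomial (Σ i, Fin (m i)) ℝ) :
    (symmetrize p).totalDegree ≤ p.totalDegree := by
  refine (totalDegree_finsetSum _ _).trans (Finset.sup_le fun a ha => ?_)
  refine (totalDegree_mul _ _).trans ?_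
  rw [totalDegree_C, zero_add]
  exact (totalDegree_symMonomial_le a).trans (le_totalDegree ha)

theorem eval_symMonomial (t : Fin k → ℕ) (a : (Σ i, Fin (m i)) →₀ ℕ) :
    eval (fun i => (t i : ℝ)) (symMonomial a) =
      ∏ i, ((t i).descFactorial #(blockSupport a i) : ℝ) /
        (m i).descFactorial #(blockSupport a i) := by
  simp [symMonomial, descPochhammer_eval_eq_descFactorial, div_eq_inv_mul]

theorem eval_indicatorPoint_monomial (A : ∀ i, Finset (Fin (m i))) (a : (Σ i, Fin (m i)) →₀ ℕ)
    (c : ℝ) :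
    eval (indicatorPoint A) (monomial a c)
      = c * ∏ i, if blockSupport a i ⊆ A i then 1 else 0 := by
  rw [eval_monomial, Finsupp.prod, support_eq_sigma_blockSupport, prod_sigma]
  congr 1
  refine prod_congr rfl fun i _ => ?_
  calc ∏ j ∈ blockSupport a i, indicatorPoint A ⟨i, j⟩ ^ a ⟨i, j⟩
      = ∏ j ∈ blockSupport a i, if j ∈ A i then 1 else 0 := prod_congr rfl fun j hj => by
        simp [indicatorPoint, ite_pow, zero_pow (mem_filter.1 hj).2]
    _ = _ := by simp [prod_boole, subset_iff]

theorem expect_levelSet_prod_ite_subset (S : ∀ i, Finset (Fin (m i))) {t : Fin k → ℕ}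
    (ht : ∀ i, t i ≤ m i) :
    𝔼 A ∈ levelSet m t, ∏ i, (if S i ⊆ A i then (1 : ℝ) else 0)
      = ∏ i, ((t i).descFactorial #(S i) : ℝ) / (m i).descFactorial #(S i) := by
  rw [levelSet, expect_piFinset_prod _ fun i B => if S i ⊆ B then (1 : ℝ) else 0]
  refine prod_congr rfl fun i _ => ?_
  simpa using
    expect_powersetCard_univ_ite_subset (K := ℝ) (S i) (n := t i) (by simpa using ht i)

theorem eval_symmetrize (p : MvPolynomial (Σ i, Fin (m i)) ℝ) {t : Fin k → ℕ}
    (ht : ∀ i, t i ≤ m i) :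
    eval (fun i => (t i : ℝ)) (symmetrize p) =
      𝔼 A ∈ levelSet m t, eval (indicatorPoint A) p := by
  have hp (A : ∀ i, Finset (Fin (m i))) : eval (indicatorPoint A) p
      = ∑ a ∈ p.support, p.coeff a * ∏ i, if blockSupport a i ⊆ A i then (1 : ℝ) else 0 := by
    conv_lhs => rw [p.as_sum]
    simp only [map_sum, eval_indicatorPoint_monomial]
  simp only [symmetrize, map_sum, map_mul, eval_C, eval_symMonomial, hp, expect_sum_comm,
    ← mul_expect, expect_levelSet_prod_ite_subset _ ht]

end Symmetrization

section WeightSubstitution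

variable {k : ℕ}

noncomputable def weightPoly (m : Fin k → ℕ) (i : Fin k) : MvPolynomial (Σ i, Fin (m i)) ℝ :=
  ∑ j, X ⟨i, j⟩

theorem totalDegree_weightPoly_le (m : Fin k → ℕ) (i : Fin k) :
    (weightPoly m i).totalDegree ≤ 1 :=
  (totalDegree_finsetSum _ _).trans (Finset.sup_le fun _ _ => (totalDegree_X _).le)

theorem eval_bind₁_weightPoly {m : Fin k → ℕ} (x : ∀ i, Fin (m i) → Bool)
    (r : MvPolynomial (Fin k) ℝ) :
    eval (fun v => if x v.1 v.2 then (1 : ℝ) else 0) (bind₁ (weightPoly m) r)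
      = eval (fun i => (#{j | x i j} : ℝ)) r := by
  rw [eval, eval₂Hom_bind₁]
  congr 2
  funext i
  simp [weightPoly, sum_boole]

end WeightSubstitution

theorem stmt16_general {k : ℕ} (m : Fin k → ℕ)
    (F : (∀ i : Fin k, Fin (m i) → Bool) → ℝ) (f : (Fin k → ℕ) → ℝ)
    (hFf : ∀ x : ∀ i : Fin k, Fin (m i) → Bool,
      F x = f fun i => (Finset.univ.filter fun j => x i j).card) :
    ∀ d : ℕ, RposProd F d = RposWt m f d := by
  intro d
  unfold RposProd RposWt
  congr 1
  ext e
  constructor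
  · rintro ⟨p, q, hp, hq, h⟩
    refine ⟨symmetrize p, symmetrize q, (totalDegree_symmetrize_le p).trans hp,
      (totalDegree_symmetrize_le q).trans hq, fun t ht => ?_⟩
    have hlevel : ∀ A ∈ levelSet m t, 0 < eval (indicatorPoint A) q ∧
        |f t - eval (indicatorPoint A) p / eval (indicatorPoint A) q| ≤ e := fun A hA => by
      have hx := h fun i j => decide (j ∈ A i)
      simp only [decide_eq_true_eq, hFf, subset_univ, filter_mem_eq_of_subset,
        card_eq_of_mem_levelSet hA] at hx
      exact hx
    rw [eval_symmetrize p ht, eval_symmetrize q ht]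
    exact ⟨expect_pos (fun A hA => (hlevel A hA).1) (levelSet_nonempty ht),
      abs_sub_expect_div_expect_le (levelSet_nonempty ht) hlevel⟩
  · rintro ⟨p, q, hp, hq, h⟩
    have hdeg := totalDegree_bind₁_le _ (totalDegree_weightPoly_le m)
    refine ⟨bind₁ (weightPoly m) p, bind₁ (weightPoly m) q, (hdeg p).trans hp, (hdeg q).trans hq,
      fun x => ?_⟩
    rw [eval_bind₁_weightPoly, eval_bind₁_weightPoly, hFf x]
    exact h _ fun i => card_le_univ _ |>.trans (by simp)

theorem stmt16 {k : ℕ} (m : Fin k → ℕ)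
    (F : (∀ i : Fin k, Fin (m i) → Bool) → ℝ) (f : (Fin k → ℕ) → ℝ)
    (hF : ∀ x, F x = 1 ∨ F x = -1)
    (hf : ∀ t : Fin k → ℕ, (∀ i, t i ≤ m i) → (f t = 1 ∨ f t = -1))
    (hFf : ∀ x : ∀ i : Fin k, Fin (m i) → Bool,
      F x = f fun i => (Finset.univ.filter fun j => x i j).card) :
    ∀ d : ℕ, RposProd F d = RposWt m f d :=
  stmt16_general m F f hFf
end

section
/- Minsky–Papert symmetrization: for any real polynomial φ on {0,1}^n of degree d, there exists a univariate polynomial p of degree at most d such that for every x ∈ {0,1}^n, the average of φ(σx) over all permutations σ ∈ S_n equals p(|x|), where |x| = x₁ + ⋯ + x_n. -/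
/-!
At a Boolean point `x` with true set `T`, the monomial `X^s` evaluates to the indicator of
`s.support ⊆ T`, so its average over `S_n` is the proportion of permutations mapping
`s.support` into `T`. Counting these by induction on `s.support` (moving one point into the set
by a swap) gives `|T|.descFactorial k / n.descFactorial k` with `k = #s.support ≤ deg φ`: the
value at `|x|` of a multiple of the descending Pochhammer polynomial of degree `k`.
-/

open Finset Equiv

namespace Equiv.Perm

variable {α : Type*} [Fintype α] [DecidableEq α] {S T : Finset α}

lemma card_mapsTo_insert_eq_of_notMem {a j : α} (ha : a ∉ S) (hj : j ∉ S) :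
    #{σ : Perm α | ∀ i ∈ insert j S, σ i ∈ T} =
      #{σ : Perm α | ∀ i ∈ insert a S, σ i ∈ T} := by
  refine card_equiv (Equiv.mulRight (swap a j)) fun σ => ?_
  have hfix : ∀ i ∈ S, swap a j i = i := fun i hi =>
    swap_apply_of_ne_of_ne (ne_of_mem_of_not_mem hi ha) (ne_of_mem_of_not_mem hi hj)
  simp +contextual [hfix]

lemma card_compl_filter_of_mapsTo {σ : Perm α} (hσ : ∀ i ∈ S, σ i ∈ T) :
    #{j ∈ Sᶜ | σ j ∈ T} = #T - #S := by
  have hsub : S ⊆ ({j | σ j ∈ T} : Finset α) := fun i hi => by simpa using hσ i hi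
  have hsdiff : ({j ∈ Sᶜ | σ j ∈ T} : Finset α) = ({j | σ j ∈ T} : Finset α) \ S := by
    ext; simp [and_comm]
  rw [hsdiff, card_sdiff_of_subset hsub, card_equiv (t := T) σ fun j => by simp]

/-- Double count the pairs `(σ, j)` with `j ∉ S`, `σ '' S ⊆ T` and `σ j ∈ T`. -/
lemma card_mapsTo_insert_mul {a : α} (ha : a ∉ S) :
    #{σ : Perm α | ∀ i ∈ insert a S, σ i ∈ T} * (Fintype.card α - #S) =
      #{σ : Perm α | ∀ i ∈ S, σ i ∈ T} * (#T - #S) := by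
  set good : Finset (Perm α) := {σ | ∀ i ∈ S, σ i ∈ T}
  have habove : ∀ j ∈ Sᶜ, #(good.bipartiteAbove (fun j σ => σ j ∈ T) j) =
      #{σ : Perm α | ∀ i ∈ insert a S, σ i ∈ T} := fun j hj => by
    rw [← card_mapsTo_insert_eq_of_notMem ha (mem_compl.1 hj), bipartiteAbove, filter_filter]
    simp only [forall_mem_insert, and_comm]
  have hbelow : ∀ σ ∈ good, #(Sᶜ.bipartiteBelow (fun j σ => σ j ∈ T) σ) = #T - #S :=
    fun σ hσ => card_compl_filter_of_mapsTo (mem_filter.1 hσ).2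
  calc _ = ∑ j ∈ Sᶜ, #(good.bipartiteAbove (fun j σ => σ j ∈ T) j) := by
        rw [sum_congr rfl habove, sum_const, card_compl, smul_eq_mul, mul_comm]
    _ = ∑ σ ∈ good, #(Sᶜ.bipartiteBelow (fun j σ => σ j ∈ T) σ) :=
        sum_card_bipartiteAbove_eq_sum_card_bipartiteBelow _
    _ = _ := by rw [sum_congr rfl hbelow, sum_const, smul_eq_mul]

theorem card_mapsTo_mul_descFactorial (S T : Finset α) :
    #{σ : Perm α | ∀ i ∈ S, σ i ∈ T} * (Fintype.card α).descFactorial #S =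
      (Fintype.card α).factorial * (#T).descFactorial #S := by
  induction S using Finset.induction_on with
  | empty => simp [Fintype.card_perm]
  | @insert a S ha ih =>
    rw [card_insert_of_notMem ha, Nat.descFactorial_succ, Nat.descFactorial_succ,
      ← mul_assoc, card_mapsTo_insert_mul ha, mul_right_comm, ih]
    ring

end Equiv.Perm

namespace MvPolynomial

variable {ι R : Type*}

lemma card_support_le_totalDegree [CommSemiring R] {p : MvPolynomial ι R} {s : ι →₀ ℕ}
    (hs : s ∈ p.support) : #s.support ≤ p.totalDegree := by
  refine le_trans ?_ (le_totalDegree hs)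
  simpa [Finsupp.sum] using card_nsmul_le_sum s.support s 1 fun i hi =>
    Nat.one_le_iff_ne_zero.2 (Finsupp.mem_support_iff.1 hi)

lemma eval_monomial_boolIndicator [CommSemiring R] (s : ι →₀ ℕ) (c : R) (x : ι → Bool) :
    eval (fun i => if x i then 1 else 0) (monomial s c) =
      if ∀ i ∈ s.support, x i then c else 0 := by
  have hpow : ∀ i ∈ s.support, (if x i then (1 : R) else 0) ^ s i = if x i then 1 else 0 :=
    fun i hi => by rw [ite_pow, one_pow, zero_pow (Finsupp.mem_support_iff.1 hi)]
  rw [eval_monomial, Finsupp.prod, prod_congr rfl hpow, prod_boole, mul_ite, mul_one, mul_zero]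

lemma sum_perm_eval_monomial_div_card [Fintype ι] [DecidableEq ι] [Field R] [CharZero R]
    (s : ι →₀ ℕ) (c : R) (x : ι → Bool) :
    (∑ σ : Perm ι, eval (fun i => if x (σ i) then 1 else 0) (monomial s c)) /
        Fintype.card (Perm ι) =
      (Polynomial.C (c / (Fintype.card ι).descFactorial #s.support) *
        descPochhammer R #s.support).eval ((#{i | x i} : ℕ) : R) := by
  have hsum : ∑ σ : Perm ι, eval (fun i => if x (σ i) then 1 else 0) (monomial s c) =
      #{σ : Perm ι | ∀ i ∈ s.support, σ i ∈ ({i | x i} : Finset ι)} * c := by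
    simp [eval_monomial_boolIndicator, sum_ite]
  have hcount := congrArg (Nat.cast (R := R))
    (Perm.card_mapsTo_mul_descFactorial s.support ({i | x i} : Finset ι))
  push_cast at hcount
  have hne : ((Fintype.card ι).descFactorial #s.support : R) ≠ 0 :=
    Nat.cast_ne_zero.2 (Nat.descFactorial_pos.2 (card_le_univ _)).ne'
  have hfact : ((Fintype.card ι).factorial : R) ≠ 0 :=
    Nat.cast_ne_zero.2 (Nat.factorial_ne_zero _)
  rw [hsum, Polynomial.eval_mul, Polynomial.eval_C, descPochhammer_eval_eq_descFactorial,
    Fintype.card_perm]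
  field_simp
  linear_combination c * hcount

section Symmetrization

variable [Fintype ι] [Field R]

noncomputable def minskyPapert (φ : MvPolynomial ι R) : Polynomial R :=
  ∑ s ∈ φ.support, Polynomial.C (φ.coeff s / (Fintype.card ι).descFactorial #s.support) *
    descPochhammer R #s.support

lemma natDegree_minskyPapert_le (φ : MvPolynomial ι R) :
    (minskyPapert φ).natDegree ≤ φ.totalDegree := by
  refine Polynomial.natDegree_sum_le_of_forall_le _ _ fun s hs => ?_
  refine (Polynomial.natDegree_C_mul_le _ _).trans ?_
  rw [descPochhammer_natDegree]
  exact card_support_le_totalDegree hs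

lemma sum_perm_eval_div_card [DecidableEq ι] [CharZero R] (φ : MvPolynomial ι R)
    (x : ι → Bool) :
    (∑ σ : Perm ι, eval (fun i => if x (σ i) then 1 else 0) φ) / Fintype.card (Perm ι) =
      (minskyPapert φ).eval ((#{i | x i} : ℕ) : R) := by
  conv_lhs => rw [φ.as_sum]
  simp only [map_sum]
  rw [sum_comm, sum_div, minskyPapert, Polynomial.eval_finsetSum]
  exact sum_congr rfl fun s _ => sum_perm_eval_monomial_div_card s _ x

end Symmetrization

end MvPolynomial

theorem stmt17 {n d : ℕ} (φ : MvPolynomial (Fin n) ℝ) (hφ : φ.totalDegree ≤ d) :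
    ∃ p : Polynomial ℝ, p.natDegree ≤ d ∧
      ∀ x : Fin n → Bool,
        (∑ σ : Equiv.Perm (Fin n),
            MvPolynomial.eval (fun i => if x (σ i) then (1 : ℝ) else 0) φ) /
            (Fintype.card (Equiv.Perm (Fin n)) : ℝ) =
          p.eval ((Finset.univ.filter fun i => x i).card : ℝ) :=
  ⟨φ.minskyPapert, φ.natDegree_minskyPapert_le.trans hφ, φ.sum_perm_eval_div_card⟩
end

section
/- Let f : {0,1}^n → {-1,1} have threshold degree d, and suppose f^KP(x,y,z) = sign(Σ_{S∈𝒮} λ_S χ_S(x,y,z)) for a family 𝒮 of subsets of the 3n variables and reals λ_S, where f^KP(x,y,z) = f(…, (¬z_i ∧ x_i) ∨ (z_i ∧ y_i), …). Then |𝒮| ≥ 2^d. In other words, dns(f^KP) ≥ 2^{deg_±(f)}. -/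
/-!
Fix a selector `z` and average the representation of `f^KP` over the bits that `z` does not
select: with `x = select z w u` and `y = select z u w` the selected input is `w` for every `u`,
so every term of the average has the sign of `f w`. The average kills each parity that contains
an unselected variable and turns the others into parities of `w`, so `f` is sign-represented by
a polynomial whose degree is the largest number of `x`- and `y`-variables of a parity of `𝒮`
compatible with `z`; hence some `S ∈ 𝒮` with at least `d` such variables is compatible with `z`.
Such an `S` is compatible with at most `2 ^ (n - d)` selectors, since its `x`- and
`y`-variables fix `z` there, so covering all `2 ^ n` selectors takes at least `2 ^ d` sets.
-/

open Finset MvPolynomial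

lemma Real.sign_eq_of_pos_mul {c r : ℝ} (hc : c = 1 ∨ c = -1) (h : 0 < c * r) :
    Real.sign r = c := by
  rcases hc with rfl | rfl
  · exact Real.sign_of_pos (by linarith)
  · exact Real.sign_of_neg (by linarith)

lemma Finset.le_card_of_forall_exists_mem {β γ : Type*} [Fintype γ] [Nonempty γ] (𝒮 : Finset β)
    (R : γ → β → Prop) [DecidableRel R] (M : ℕ) (hcover : ∀ z, ∃ S ∈ 𝒮, R z S)
    (hsmall : ∀ S ∈ 𝒮, #{z | R z S} * M ≤ Fintype.card γ) : M ≤ #𝒮 := by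
  classical
  have hsub : (univ : Finset γ) ⊆ 𝒮.biUnion fun S => {z | R z S} := fun z _ => by
    obtain ⟨S, hS, hzS⟩ := hcover z
    exact mem_biUnion.2 ⟨S, hS, mem_filter.2 ⟨mem_univ z, hzS⟩⟩
  have h : Fintype.card γ * M ≤ Fintype.card γ * #𝒮 :=
    calc Fintype.card γ * M ≤ (∑ S ∈ 𝒮, #{z | R z S}) * M := by
          gcongr; exact (card_le_card hsub).trans card_biUnion_le
      _ = ∑ S ∈ 𝒮, #{z | R z S} * M := sum_mul _ _ _
      _ ≤ ∑ _S ∈ 𝒮, Fintype.card γ := sum_le_sum hsmall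
      _ = Fintype.card γ * #𝒮 := by rw [sum_const, smul_eq_mul, mul_comm]
  exact Nat.le_of_mul_le_mul_left h Fintype.card_pos

namespace KrausePudlak

variable {α β ι : Type*}

def boolSign (b : Bool) : ℝ := if b then -1 else 1

def parity (s : Finset α) (a : α → Bool) : ℝ := ∏ v ∈ s, boolSign (a v)

lemma neg_one_pow_card_filter (s : Finset α) (a : α → Bool) :
    (-1 : ℝ) ^ #(s.filter fun v => a v) = parity s a := by
  simp only [parity, boolSign]
  rw [prod_ite, prod_const, prod_const, one_pow, mul_one]

lemma parity_sumElim (s : Finset (α ⊕ β)) (a : α → Bool) (b : β → Bool) :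
    parity s (Sum.elim a b) = parity s.toLeft a * parity s.toRight b :=
  prod_sum_eq_prod_toLeft_mul_prod_toRight s _

lemma parity_eq_prod_univ [Fintype α] [DecidableEq α] (s : Finset α) (a : α → Bool) :
    parity s a = ∏ v, if v ∈ s then boolSign (a v) else 1 :=
  (Fintype.prod_ite_mem s _).symm

def select (z x y : ι → Bool) : ι → Bool := fun i => if z i then y i else x i

lemma select_select_swap (z w u : ι → Bool) : select z (select z w u) (select z u w) = w := by
  funext i; by_cases h : z i <;> simp [select, h]

-- `z` selects every `x`-variable (indices in `s`) and every `y`-variable (indices in `t`).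
def Compatible (z : ι → Bool) (s t : Finset ι) : Prop :=
  ∀ i, (i ∈ s → z i = false) ∧ (i ∈ t → z i = true)

instance [Fintype ι] [DecidableEq ι] (z : ι → Bool) (s t : Finset ι) :
    Decidable (Compatible z s t) := by
  unfold Compatible; infer_instance

lemma sum_bool_select_factor [DecidableEq ι] (s t : Finset ι) (i : ι) (zi wi : Bool) :
    ∑ b : Bool, (if i ∈ s then boolSign (if zi then b else wi) else 1) *
        (if i ∈ t then boolSign (if zi then wi else b) else 1) =
      if (i ∈ s → zi = false) ∧ (i ∈ t → zi = true) then
        2 * ((if i ∈ s then boolSign wi else 1) * (if i ∈ t then boolSign wi else 1))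
      else 0 := by
  by_cases hs : i ∈ s <;> by_cases ht : i ∈ t <;> cases zi <;> cases wi <;>
    simp [hs, ht, boolSign]

lemma sum_parity_select [Fintype ι] [DecidableEq ι] (z w : ι → Bool) (s t : Finset ι) :
    ∑ u : ι → Bool, parity s (select z w u) * parity t (select z u w) =
      if Compatible z s t then 2 ^ Fintype.card ι * (parity s w * parity t w) else 0 := by
  simp only [parity_eq_prod_univ, ← prod_mul_distrib, select]
  rw [← Fintype.prod_sum fun i b =>
    (if i ∈ s then boolSign (if z i then b else w i) else 1) *
      (if i ∈ t then boolSign (if z i then w i else b) else 1)]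
  simp only [sum_bool_select_factor, Fintype.prod_ite_zero, prod_mul_distrib, prod_const,
    card_univ]
  rfl

lemma Compatible.disjoint {z : ι → Bool} {s t : Finset ι} (h : Compatible z s t) :
    Disjoint s t :=
  disjoint_left.2 fun i his hit => by simpa [(h i).1 his] using (h i).2 hit

lemma Compatible.eq_of_forall_notMem {z₁ z₂ : ι → Bool} {s t : Finset ι} [DecidableEq ι]
    (h₁ : Compatible z₁ s t) (h₂ : Compatible z₂ s t) (h : ∀ i ∉ s ∪ t, z₁ i = z₂ i) :
    z₁ = z₂ := by
  funext i
  by_cases hi : i ∈ s ∪ t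
  · rcases mem_union.1 hi with his | hit
    · rw [(h₁ i).1 his, (h₂ i).1 his]
    · rw [(h₁ i).2 hit, (h₂ i).2 hit]
  · exact h i hi

lemma card_compatible_mul_two_pow_le [Fintype ι] [DecidableEq ι] (s t : Finset ι) :
    #{z : ι → Bool | Compatible z s t} * 2 ^ (#s + #t) ≤ 2 ^ Fintype.card ι := by
  obtain hempty | ⟨z₀, hz₀⟩ :=
    (univ.filter fun z : ι → Bool => Compatible z s t).eq_empty_or_nonempty
  · simp [hempty]
  have hcard : #{z : ι → Bool | Compatible z s t} ≤ 2 ^ (Fintype.card ι - #(s ∪ t)) :=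
    calc _ ≤ Fintype.card (((s ∪ t)ᶜ : Finset ι) → Bool) :=
          card_le_card_of_injOn (fun z j => z j) (fun _ _ => mem_univ _) fun z₁ h₁ z₂ h₂ h =>
            Compatible.eq_of_forall_notMem (mem_filter.1 h₁).2 (mem_filter.1 h₂).2
              fun i hi => congrFun h ⟨i, mem_compl.2 hi⟩
      _ = _ := by rw [Fintype.card_fun, Fintype.card_coe, card_compl, Fintype.card_bool]
  calc _ ≤ 2 ^ (Fintype.card ι - #(s ∪ t)) * 2 ^ (#s + #t) := Nat.mul_le_mul_right _ hcard
    _ = 2 ^ Fintype.card ι := by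
      rw [← card_union_of_disjoint (mem_filter.1 hz₀).2.disjoint, ← pow_add,
        Nat.sub_add_cancel (card_le_univ _)]

noncomputable def chiPoly (s : Finset ι) : MvPolynomial ι ℝ := ∏ i ∈ s, (1 - 2 * X i)

lemma eval_chiPoly (s : Finset ι) (w : ι → Bool) :
    eval (fun i => if w i then 1 else 0) (chiPoly s) = parity s w := by
  simp only [chiPoly, parity, map_prod]
  refine prod_congr rfl fun i _ => ?_
  cases hw : w i <;> norm_num [boolSign, hw]

lemma totalDegree_chiPoly_le (s : Finset ι) : (chiPoly s).totalDegree ≤ #s := by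
  refine (totalDegree_finsetProd _ _).trans ?_
  refine (sum_le_card_nsmul _ _ 1 fun i _ => ?_).trans (by simp)
  refine (totalDegree_sub _ _).trans (max_le (by simp) ?_)
  refine (totalDegree_mul _ _).trans ?_
  rw [← map_ofNat C 2, totalDegree_C, totalDegree_X]

def SignRepresents (f : (ι → Bool) → ℝ) (P : MvPolynomial ι ℝ) : Prop :=
  ∀ x, f x = Real.sign (eval (fun i => if x i then 1 else 0) P)

section KrausePudlakTransform

variable [Fintype ι] [DecidableEq ι] (𝒮 : Finset (Finset (ι ⊕ ι ⊕ ι)))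
  (lam : Finset (ι ⊕ ι ⊕ ι) → ℝ)

-- `S.toLeft`, `S.toRight.toLeft` and `S.toRight.toRight` are the `x`-, `y`- and `z`-indices of `S`.
def kpSum (x y z : ι → Bool) : ℝ := ∑ S ∈ 𝒮, lam S * parity S (Sum.elim x (Sum.elim y z))

noncomputable def restrictPoly (z : ι → Bool) : MvPolynomial ι ℝ :=
  ∑ S ∈ 𝒮 with Compatible z S.toLeft S.toRight.toLeft,
    C (lam S * parity S.toRight.toRight z) * (chiPoly S.toLeft * chiPoly S.toRight.toLeft)

lemma sum_kpSum_select (z w : ι → Bool) :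
    ∑ u, kpSum 𝒮 lam (select z w u) (select z u w) z =
      2 ^ Fintype.card ι * eval (fun i => if w i then 1 else 0) (restrictPoly 𝒮 lam z) := by
  rw [restrictPoly, map_sum, sum_filter, mul_sum]
  simp only [kpSum, map_mul, eval_C, eval_chiPoly]
  rw [sum_comm]
  refine sum_congr rfl fun S _ => ?_
  simp only [parity_sumElim]
  calc ∑ u, lam S * (parity S.toLeft (select z w u) *
          (parity S.toRight.toLeft (select z u w) * parity S.toRight.toRight z))
      = lam S * parity S.toRight.toRight z *
          ∑ u, parity S.toLeft (select z w u) * parity S.toRight.toLeft (select z u w) := by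
        rw [mul_sum]; exact sum_congr rfl fun _ _ => by ring
    _ = _ := by rw [sum_parity_select]; split_ifs <;> ring

lemma totalDegree_restrictPoly_le (z : ι → Bool) :
    (restrictPoly 𝒮 lam z).totalDegree ≤
      (𝒮.filter fun S => Compatible z S.toLeft S.toRight.toLeft).sup
        fun S => #S.toLeft + #S.toRight.toLeft := by
  refine (totalDegree_finsetSum _ _).trans (sup_mono_fun fun S _ => ?_)
  refine (totalDegree_mul _ _).trans ?_
  rw [totalDegree_C, zero_add]
  exact (totalDegree_mul _ _).trans
    (add_le_add (totalDegree_chiPoly_le _) (totalDegree_chiPoly_le _))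

variable {𝒮 lam} {f : (ι → Bool) → ℝ}

lemma signRepresents_restrictPoly (hf : ∀ x, f x = 1 ∨ f x = -1)
    (hrep : ∀ x y z, kpSum 𝒮 lam x y z ≠ 0 ∧ f (select z x y) = Real.sign (kpSum 𝒮 lam x y z))
    (z : ι → Bool) : SignRepresents f (restrictPoly 𝒮 lam z) := by
  intro w
  have hpos : ∀ u, 0 < f w * kpSum 𝒮 lam (select z w u) (select z u w) z := fun u => by
    obtain ⟨hne, hsign⟩ := hrep (select z w u) (select z u w) z
    rw [select_select_swap] at hsign
    rw [hsign]
    exact Real.sign_mul_pos_of_ne_zero _ hne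
  have hsum := sum_pos (fun u _ => hpos u) univ_nonempty
  rw [← mul_sum, sum_kpSum_select, mul_left_comm] at hsum
  exact (Real.sign_eq_of_pos_mul (hf w) (pos_of_mul_pos_right hsum (by positivity))).symm

lemma exists_compatible_le_card {d : ℕ} (hf : ∀ x, f x = 1 ∨ f x = -1)
    (hd : ∀ P, SignRepresents f P → d ≤ P.totalDegree)
    (hrep : ∀ x y z, kpSum 𝒮 lam x y z ≠ 0 ∧ f (select z x y) = Real.sign (kpSum 𝒮 lam x y z))
    (z : ι → Bool) :
    ∃ S ∈ 𝒮, Compatible z S.toLeft S.toRight.toLeft ∧ d ≤ #S.toLeft + #S.toRight.toLeft := by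
  have hP := signRepresents_restrictPoly hf hrep z
  have hne : (𝒮.filter fun S => Compatible z S.toLeft S.toRight.toLeft).Nonempty := by
    rw [nonempty_iff_ne_empty]
    intro hempty
    have h0 := hP fun _ => false
    rw [restrictPoly, hempty, sum_empty, map_zero, Real.sign_zero] at h0
    rcases hf fun _ => false with h | h <;> rw [h0] at h <;> norm_num at h
  obtain ⟨S, hS, hsup⟩ := exists_mem_eq_sup _ hne fun S => #S.toLeft + #S.toRight.toLeft
  exact ⟨S, (mem_filter.1 hS).1, (mem_filter.1 hS).2,
    (hd _ hP).trans ((totalDegree_restrictPoly_le 𝒮 lam z).trans hsup.le)⟩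

end KrausePudlakTransform

end KrausePudlak

open KrausePudlak in
theorem stmt19 {n d : ℕ} (f : (Fin n → Bool) → ℝ)
    (hf : ∀ x, f x = 1 ∨ f x = -1)
    (hd : IsLeast {d' : ℕ | ∃ P : MvPolynomial (Fin n) ℝ, P.totalDegree ≤ d' ∧
        ∀ x : Fin n → Bool,
          f x = Real.sign (MvPolynomial.eval (fun i => if x i then (1 : ℝ) else 0) P)} d)
    (𝒮 : Finset (Finset (Fin n ⊕ Fin n ⊕ Fin n)))
    (lam : Finset (Fin n ⊕ Fin n ⊕ Fin n) → ℝ)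
    (hrep : ∀ x y z : Fin n → Bool,
      (∑ S ∈ 𝒮, lam S *
          (-1 : ℝ) ^ (S.filter fun v => Sum.elim x (Sum.elim y z) v).card) ≠ 0 ∧
      f (fun i => if z i then y i else x i) =
        Real.sign (∑ S ∈ 𝒮, lam S *
          (-1 : ℝ) ^ (S.filter fun v => Sum.elim x (Sum.elim y z) v).card)) :
    2 ^ d ≤ 𝒮.card := by
  simp only [neg_one_pow_card_filter] at hrep
  have hcover := exists_compatible_le_card hf (fun P hP => hd.2 ⟨P, le_rfl, hP⟩) hrep
  refine le_card_of_forall_exists_mem 𝒮 _ _ hcover fun S _ => ?_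
  by_cases hS : d ≤ #S.toLeft + #S.toRight.toLeft
  · calc _ ≤ #{z | Compatible z S.toLeft S.toRight.toLeft} *
            2 ^ (#S.toLeft + #S.toRight.toLeft) := by
          gcongr with z
          · exact And.left
          · exact one_le_two
      _ ≤ 2 ^ Fintype.card (Fin n) := card_compatible_mul_two_pow_le _ _
      _ = Fintype.card (Fin n → Bool) := by simp
  · simp [hS]
end
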